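/- arXiv:2301.04296 — 3 statements merged into one kernel-verified Lean document; each statement's English description precedes it below -/
import Mathlib

section
/- Let M ∈ L_n(b_L, b_U) (as defined in the paper) and define the approximating matrix S(M) = (s_{ij}) by s_{ij} = δ_{ij}/m_{ii} + 1/m_{2n,2n} when i,j both lie in {1,...,n} or both lie in {n+1,...,2n-1}, and s_{ij} = -1/m_{2n,2n} otherwise, where m_{2n,i} = m_{ii} - ∑_{j≠i} m_{ij} and m_{2n,2n} = ∑_{i=1}^{2n-1} m_{2n,i}. If b_U/b_L = o(n), then for all sufficiently large n, ‖M^{-1} - S(M)‖_max ≤ c₁ b_U² / (b_L³ (n-1)²) for an absolute constant c₁ independent of M and n. -/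
open Finset Filter

/-- The matrix class `L_n(b_L, b_U)` of (A.1) (0-based indexing). -/
def memL (n : ℕ) (bL bU : ℝ) (M : Matrix (Fin (2 * n - 1)) (Fin (2 * n - 1)) ℝ) : Prop :=
  (∀ i j, M i j = M j i) ∧ (∀ i j, 0 ≤ M i j) ∧
  (∀ i j : Fin (2 * n - 1), (i : ℕ) < n → (j : ℕ) < n → i ≠ j → M i j = 0) ∧
  (∀ i j : Fin (2 * n - 1), n ≤ (i : ℕ) → n ≤ (j : ℕ) → i ≠ j → M i j = 0) ∧
  (∀ i j : Fin (2 * n - 1), (i : ℕ) < n - 1 → (j : ℕ) = n + (i : ℕ) → M i j = 0) ∧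
  (∀ i : Fin (2 * n - 1), (i : ℕ) < n →
    bL ≤ M i i - ∑ j ∈ univ.filter (fun j : Fin (2 * n - 1) => n ≤ (j : ℕ)), M i j ∧
    M i i - ∑ j ∈ univ.filter (fun j : Fin (2 * n - 1) => n ≤ (j : ℕ)), M i j ≤ bU) ∧
  (∀ i : Fin (2 * n - 1), n ≤ (i : ℕ) →
    M i i = ∑ k ∈ univ.filter (fun k : Fin (2 * n - 1) => (k : ℕ) < n), M k i) ∧
  (∀ i j : Fin (2 * n - 1), (i : ℕ) < n → n ≤ (j : ℕ) → (j : ℕ) ≠ n + (i : ℕ) →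
    bL ≤ M i j ∧ M i j ≤ bU)

/-- The explicit approximate inverse `S(M)` of Yan, Leng and Zhu (2016). -/
noncomputable def approxS (n : ℕ) (M : Matrix (Fin (2 * n - 1)) (Fin (2 * n - 1)) ℝ) :
    Matrix (Fin (2 * n - 1)) (Fin (2 * n - 1)) ℝ :=
  fun i j =>
    let m2n : Fin (2 * n - 1) → ℝ := fun k => M k k - ∑ l ∈ univ.filter (· ≠ k), M k l
    let m22 : ℝ := ∑ k, m2n k
    if ((i : ℕ) < n ∧ (j : ℕ) < n) ∨ (n ≤ (i : ℕ) ∧ n ≤ (j : ℕ)) then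
      (if i = j then 1 / M i i else 0) + 1 / m22
    else -(1 / m22)

/-!
Conjugating by `D = diag(±1)` (sign `-1` on the second block) turns `M` into
`signedMatrix = diag(rowExcess) + L`, where `L` is the Laplacian of the bipartite graph with
edge weights `M i k`. Its quadratic form dominates `n b_L x_j² / 24`, so it is invertible and
every entry of its inverse is at most `K = 24 / (n b_L)` in absolute value.

Fix a column `v` of that inverse. For `i ≠ j`, row `i` of `signedMatrix *ᵥ v = e_j` says that
`v i` is `1 - κ_i` times an average of `v` over the opposite block, with
`κ_i = rowExcess i / M i i ≤ ε` and weights `M i k / crossSum i ≤ ε`, `ε = 2 b_U / (n b_L)`.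
Two rows of the same block share weight at least `θ = b_L / (2 b_U)`, so by Dobrushin's coupling
bound every passage from one block to the other shrinks the oscillation of `v` by `1 - θ`, up to
`O(ε K)`; hence `v` oscillates by `O(ε K / θ)` on the first block. The identity
`∑ k, rowExcess k * v k = 1` places `1 / excessSum` inside that range, and one more averaging
step handles the second block and the diagonal entry. All errors are
`O(ε K / θ) = O(b_U² / (n² b_L³))`.
-/

open Matrix

section Averages
variable {ι : Type*} {t : Finset ι} {p q u v : ι → ℝ}

theorem abs_sum_mul_le_of_sum_eq_one (hp0 : ∀ x ∈ t, 0 ≤ p x) (hp1 : ∑ x ∈ t, p x = 1) {C : ℝ}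
    (hu : ∀ x ∈ t, |u x| ≤ C) : |∑ x ∈ t, p x * u x| ≤ C :=
  calc |∑ x ∈ t, p x * u x| ≤ ∑ x ∈ t, p x * C := by
        refine (abs_sum_le_sum_abs _ _).trans (sum_le_sum fun x hx => ?_)
        rw [abs_mul, abs_of_nonneg (hp0 x hx)]
        exact mul_le_mul_of_nonneg_left (hu x hx) (hp0 x hx)
    _ = C := by rw [← sum_mul, hp1, one_mul]

theorem nonneg_of_le_of_sum_eq_one (hp0 : ∀ x ∈ t, 0 ≤ p x) (hp1 : ∑ x ∈ t, p x = 1) {ε : ℝ}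
    (hpε : ∀ x ∈ t, p x ≤ ε) : 0 ≤ ε := by
  obtain ⟨x, hx⟩ := nonempty_of_sum_ne_zero (hp1.trans_ne one_ne_zero)
  exact (hp0 x hx).trans (hpε x hx)

theorem sum_ite_eq_le [DecidableEq ι] (j : ι) {a b : ℝ} (hb : 0 ≤ b) (ha : j ∈ t → a ≤ b) :
    ∑ x ∈ t, (if x = j then a else 0) ≤ b := by
  rw [sum_ite_eq']
  split_ifs with h
  exacts [ha h, hb]

theorem abs_sum_mul_le_of_sum_eq_one_of_ne [DecidableEq ι] (hp0 : ∀ x ∈ t, 0 ≤ p x)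
    (hp1 : ∑ x ∈ t, p x = 1) {ε C C' : ℝ} (j : ι) (hpε : ∀ x ∈ t, p x ≤ ε) (hC : 0 ≤ C)
    (hu : ∀ x ∈ t, x ≠ j → |u x| ≤ C) (huj : |u j| ≤ C') :
    |∑ x ∈ t, p x * u x| ≤ C + ε * C' := by
  have hε := nonneg_of_le_of_sum_eq_one hp0 hp1 hpε
  have hpoint : ∀ x ∈ t, |p x * u x| ≤ p x * C + if x = j then ε * C' else 0 := by
    intro x hx
    rw [abs_mul, abs_of_nonneg (hp0 x hx)]
    split_ifs with h
    · subst h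
      nlinarith [hp0 x hx, hpε x hx, abs_nonneg (u x)]
    · simpa using mul_le_mul_of_nonneg_left (hu x hx h) (hp0 x hx)
  calc |∑ x ∈ t, p x * u x| ≤ ∑ x ∈ t, (p x * C + if x = j then ε * C' else 0) :=
        (abs_sum_le_sum_abs _ _).trans (sum_le_sum hpoint)
    _ ≤ C + ε * C' := by
        rw [sum_add_distrib, ← sum_mul, hp1, one_mul]
        exact add_le_add_right
          (sum_ite_eq_le j (mul_nonneg hε ((abs_nonneg _).trans huj)) fun _ => le_rfl) _

/-- Dobrushin's coupling bound. -/
theorem sum_sub_mul_le_of_overlap (hp1 : ∑ x ∈ t, p x = 1) (hq1 : ∑ x ∈ t, q x = 1)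
    {lo hi θ : ℝ} (hlohi : lo ≤ hi) (hv : ∀ x ∈ t, lo ≤ v x ∧ v x ≤ hi)
    (hθ : θ ≤ ∑ x ∈ t, min (p x) (q x)) :
    ∑ x ∈ t, (p x - q x) * v x ≤ (1 - θ) * (hi - lo) := by
  set W := ∑ x ∈ t, min (p x) (q x)
  have hup : ∑ x ∈ t, (p x - min (p x) (q x)) * v x ≤ (1 - W) * hi := by
    rw [← hp1, ← sum_sub_distrib, sum_mul]
    exact sum_le_sum fun x hx =>
      mul_le_mul_of_nonneg_left (hv x hx).2 (sub_nonneg.2 (min_le_left _ _))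
  have hlow : (1 - W) * lo ≤ ∑ x ∈ t, (q x - min (p x) (q x)) * v x := by
    rw [← hq1, ← sum_sub_distrib, sum_mul]
    exact sum_le_sum fun x hx =>
      mul_le_mul_of_nonneg_left (hv x hx).1 (sub_nonneg.2 (min_le_right _ _))
  have hsplit : ∑ x ∈ t, (p x - q x) * v x = ∑ x ∈ t, (p x - min (p x) (q x)) * v x
      - ∑ x ∈ t, (q x - min (p x) (q x)) * v x := by
    rw [← sum_sub_distrib]; exact sum_congr rfl fun x _ => by ring
  nlinarith

theorem sum_sub_mul_le_of_overlap_of_ne [DecidableEq ι] (hp0 : ∀ x ∈ t, 0 ≤ p x)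
    (hq0 : ∀ x ∈ t, 0 ≤ q x) (hp1 : ∑ x ∈ t, p x = 1) (hq1 : ∑ x ∈ t, q x = 1)
    {lo hi θ ε : ℝ} (j : ι) (hpε : ∀ x ∈ t, p x ≤ ε) (hqε : ∀ x ∈ t, q x ≤ ε)
    (hlohi : lo ≤ hi) (hv : ∀ x ∈ t, x ≠ j → lo ≤ v x ∧ v x ≤ hi)
    (hθ : θ ≤ ∑ x ∈ t, min (p x) (q x)) :
    ∑ x ∈ t, (p x - q x) * v x ≤ (1 - θ) * (hi - lo) + ε * |v j - lo| := by
  have hε := nonneg_of_le_of_sum_eq_one hp0 hp1 hpε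
  have hsplit : ∀ x ∈ t, (p x - q x) * v x = (p x - q x) * (if x = j then lo else v x)
      + if x = j then (p j - q j) * (v j - lo) else 0 := by
    intro x _
    split_ifs with h
    · subst h; ring
    · ring
  rw [sum_congr rfl hsplit, sum_add_distrib]
  refine add_le_add (sum_sub_mul_le_of_overlap hp1 hq1 hlohi (fun x hx => ?_) hθ)
    (sum_ite_eq_le j (by positivity) fun hj => ?_)
  · split_ifs with h
    exacts [⟨le_rfl, hlohi⟩, hv x hx h]
  · calc (p j - q j) * (v j - lo) ≤ |p j - q j| * |v j - lo| := by
          rw [← abs_mul]; exact le_abs_self _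
      _ ≤ ε * |v j - lo| := by
          gcongr
          rw [abs_le]
          constructor <;> linarith [hp0 j hj, hq0 j hj, hpε j hj, hqε j hj]

theorem card_sub_mul_le_sum {f : ι → ℝ} {c : ℝ} (P : ι → Prop) [DecidablePred P] {m : ℕ}
    (hc : 0 ≤ c) (hf0 : ∀ x ∈ t, 0 ≤ f x) (hfc : ∀ x ∈ t, ¬ P x → c ≤ f x)
    (hm : (t.filter P).card ≤ m) :
    ((t.card : ℝ) - m) * c ≤ ∑ x ∈ t, f x := by
  have hcard : (t.card : ℝ) - m ≤ (t.filter fun x => ¬ P x).card := by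
    have := card_filter_add_card_filter_not (s := t) P
    have : (t.card : ℝ) ≤ m + (t.filter fun x => ¬ P x).card := by exact_mod_cast (by omega)
    linarith
  calc ((t.card : ℝ) - m) * c ≤ (t.filter fun x => ¬ P x).card * c :=
        mul_le_mul_of_nonneg_right hcard hc
    _ ≤ ∑ x ∈ t.filter fun x => ¬ P x, f x := by
        rw [← nsmul_eq_mul]
        exact card_nsmul_le_sum _ _ _ fun x hx => hfc x (mem_filter.1 hx).1 (mem_filter.1 hx).2
    _ ≤ ∑ x ∈ t, f x := sum_le_sum_of_subset_of_nonneg (filter_subset _ _) fun x hx _ => hf0 x hx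

theorem sub_le_div_of_two_block_contraction {w : ι → ℝ} {A B : Finset ι}
    (hA : A.Nonempty) (hB : B.Nonempty) {θ E : ℝ} (hθ : 0 < θ) (hθ1 : θ ≤ 1)
    (hAB : ∀ b ∈ B, ∀ b' ∈ B, (∀ k ∈ B, w b' ≤ w k ∧ w k ≤ w b) →
      ∀ a ∈ A, ∀ a' ∈ A, w a - w a' ≤ (1 - θ) * (w b - w b') + E)
    (hBA : ∀ a ∈ A, ∀ a' ∈ A, (∀ k ∈ A, w a' ≤ w k ∧ w k ≤ w a) →
      ∀ b ∈ B, ∀ b' ∈ B, w b - w b' ≤ (1 - θ) * (w a - w a') + E) :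
    ∀ a ∈ A, ∀ a' ∈ A, w a - w a' ≤ E / θ := by
  obtain ⟨aM, haM, haM'⟩ := exists_max_image A w hA
  obtain ⟨am, ham, ham'⟩ := exists_min_image A w hA
  obtain ⟨bM, hbM, hbM'⟩ := exists_max_image B w hB
  obtain ⟨bm, hbm, hbm'⟩ := exists_min_image B w hB
  have hDA := hAB bM hbM bm hbm (fun k hk => ⟨hbm' k hk, hbM' k hk⟩) aM haM am ham
  have hDB := hBA aM haM am ham (fun k hk => ⟨ham' k hk, haM' k hk⟩) bM hbM bm hbm
  have hA0 : 0 ≤ w aM - w am := sub_nonneg.2 (haM' am ham)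
  have hθD : θ * (w aM - w am) ≤ E := by
    have := mul_le_mul_of_nonneg_left hDB (sub_nonneg.2 hθ1)
    nlinarith
  intro a ha a' ha'
  rw [le_div_iff₀ hθ]
  nlinarith [haM' a ha, ham' a' ha']

end Averages

section SquareMatrix
variable {ι : Type*} [Fintype ι] [DecidableEq ι]

theorem isUnit_det_of_mul_sq_le_dotProduct_mulVec {A : Matrix ι ι ℝ} {c : ℝ} (hc : 0 < c)
    (h : ∀ x j, c * x j ^ 2 ≤ x ⬝ᵥ A *ᵥ x) : IsUnit A.det := by
  refine isUnit_iff_ne_zero.2 fun hdet => ?_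
  obtain ⟨x, hx0, hx⟩ := exists_mulVec_eq_zero_iff.2 hdet
  refine hx0 (funext fun j => pow_eq_zero_iff two_ne_zero |>.1 ?_)
  have := h x j
  rw [hx, dotProduct_zero] at this
  nlinarith [sq_nonneg (x j)]

theorem abs_le_of_mulVec_eq_single {A : Matrix ι ι ℝ} {c : ℝ} (hc : 0 < c)
    (h : ∀ x j, c * x j ^ 2 ≤ x ⬝ᵥ A *ᵥ x) {v : ι → ℝ} {j : ι} (hv : A *ᵥ v = Pi.single j 1)
    (i : ι) : |v i| ≤ 1 / c := by
  have hq : ∀ k, c * v k ^ 2 ≤ v j := fun k => by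
    simpa [hv, dotProduct_single_one] using h v k
  have hj : c * v j ≤ 1 := by nlinarith [hq j]
  refine abs_le_of_sq_le_sq' ?_ (by positivity) |>.elim (fun h1 h2 => abs_le.2 ⟨h1, h2⟩)
  rw [div_pow, le_div_iff₀ (by positivity)]
  nlinarith [hq i]

theorem diagonal_sub_mulVec_apply (f : ι → ℝ) (C : Matrix ι ι ℝ) (x : ι → ℝ) (i : ι) :
    ((diagonal f - C) *ᵥ x) i = f i * x i - ∑ k, C i k * x k := by
  rw [sub_mulVec, Pi.sub_apply, mulVec_diagonal]
  rfl

theorem dotProduct_laplacian_mulVec {C : Matrix ι ι ℝ} (hC : C.IsSymm) (d x : ι → ℝ) :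
    x ⬝ᵥ (diagonal (fun i => d i + ∑ k, C i k) - C) *ᵥ x
      = ∑ i, d i * x i ^ 2 + (∑ i, ∑ k, C i k * (x i - x k) ^ 2) / 2 := by
  have hswap : ∑ i, ∑ k, C i k * x k ^ 2 = ∑ i, ∑ k, C i k * x i ^ 2 := by
    rw [sum_comm]; exact sum_congr rfl fun i _ => sum_congr rfl fun k _ => by rw [hC.apply]
  have hexp : ∑ i, ∑ k, C i k * (x i - x k) ^ 2 = ∑ i, ∑ k, C i k * x i ^ 2
      + ∑ i, ∑ k, C i k * x k ^ 2 - 2 * ∑ i, ∑ k, x i * (C i k * x k) := by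
    simp only [mul_sum, ← sum_add_distrib, ← sum_sub_distrib]
    exact sum_congr rfl fun i _ => sum_congr rfl fun k _ => by ring
  have hlhs : x ⬝ᵥ (diagonal (fun i => d i + ∑ k, C i k) - C) *ᵥ x
      = ∑ i, d i * x i ^ 2 + ∑ i, ∑ k, C i k * x i ^ 2 - ∑ i, ∑ k, x i * (C i k * x k) := by
    simp only [dotProduct, diagonal_sub_mulVec_apply, ← sum_add_distrib, ← sum_sub_distrib]
    refine sum_congr rfl fun i _ => ?_
    simp only [← mul_sum, ← sum_mul]
    ring
  rw [hlhs, hexp, hswap]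
  ring

theorem inv_apply_eq_mul_inv_diagonal_mul_mul_diagonal {σ : ι → ℝ} (hσ : ∀ i, σ i * σ i = 1)
    (A : Matrix ι ι ℝ) (i j : ι) :
    A⁻¹ i j = σ i * (diagonal σ * A * diagonal σ)⁻¹ i j * σ j := by
  have hD : (diagonal σ)⁻¹ = diagonal σ :=
    inv_eq_left_inv (by rw [diagonal_mul_diagonal]; simp [hσ])
  rw [Matrix.mul_inv_rev, Matrix.mul_inv_rev, hD, ← Matrix.mul_assoc, mul_diagonal, diagonal_mul]
  linear_combination (-A⁻¹ i j * σ j * σ j) * hσ i - A⁻¹ i j * hσ j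

/-- `rowExcess M i` is the paper's `m_{2n,i}` and `excessSum M` its `m_{2n,2n}`. -/
noncomputable def rowExcess (M : Matrix ι ι ℝ) (i : ι) : ℝ :=
  M i i - ∑ l ∈ univ.filter (· ≠ i), M i l

noncomputable def excessSum (M : Matrix ι ι ℝ) : ℝ :=
  ∑ k, rowExcess M k

end SquareMatrix

section Blocks
variable {n : ℕ}

/-- The paper's index blocks `{1, …, n}` and `{n + 1, …, 2n - 1}`, shifted to start at `0`. -/
def alphaIdx (n : ℕ) : Finset (Fin (2 * n - 1)) := univ.filter fun i => (i : ℕ) < n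

def betaIdx (n : ℕ) : Finset (Fin (2 * n - 1)) := univ.filter fun i => n ≤ (i : ℕ)

def oppBlock (n : ℕ) (i : Fin (2 * n - 1)) : Finset (Fin (2 * n - 1)) :=
  if (i : ℕ) < n then betaIdx n else alphaIdx n

@[simp] theorem mem_alphaIdx {i : Fin (2 * n - 1)} : i ∈ alphaIdx n ↔ (i : ℕ) < n := by
  simp [alphaIdx]

@[simp] theorem mem_betaIdx {i : Fin (2 * n - 1)} : i ∈ betaIdx n ↔ n ≤ (i : ℕ) := by
  simp [betaIdx]

theorem mem_oppBlock {i k : Fin (2 * n - 1)} :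
    k ∈ oppBlock n i ↔ ((k : ℕ) < n ↔ n ≤ (i : ℕ)) := by
  unfold oppBlock
  split_ifs <;> simp <;> omega

theorem oppBlock_of_lt {i : Fin (2 * n - 1)} (hi : (i : ℕ) < n) : oppBlock n i = betaIdx n :=
  if_pos hi

theorem oppBlock_of_le {i : Fin (2 * n - 1)} (hi : n ≤ (i : ℕ)) : oppBlock n i = alphaIdx n :=
  if_neg (not_lt.2 hi)

theorem notMem_oppBlock_self (i : Fin (2 * n - 1)) : i ∉ oppBlock n i := by
  rw [mem_oppBlock]; omega

theorem card_alphaIdx (hn : 1 ≤ n) : (alphaIdx n).card = n := by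
  rw [alphaIdx, Fin.card_filter_val_lt]; omega

theorem card_betaIdx (hn : 1 ≤ n) : (betaIdx n).card = n - 1 := by
  have := card_filter_add_card_filter_not (s := univ) fun i : Fin (2 * n - 1) => (i : ℕ) < n
  simp only [not_lt, card_univ, Fintype.card_fin] at this
  rw [betaIdx]
  rw [← alphaIdx, card_alphaIdx hn] at this
  omega

theorem card_oppBlock_bounds (hn : 1 ≤ n) (i : Fin (2 * n - 1)) :
    (n : ℝ) - 1 ≤ (oppBlock n i).card ∧ ((oppBlock n i).card : ℝ) ≤ n := by
  unfold oppBlock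
  split_ifs
  · rw [card_betaIdx hn, Nat.cast_sub hn]; constructor <;> simp
  · rw [card_alphaIdx hn]; constructor <;> simp

/-- The indices `i < n` and `n + i` refer to the same node of the underlying network. -/
def IsPartner (n : ℕ) (i k : Fin (2 * n - 1)) : Prop := (k : ℕ) = n + i ∨ (i : ℕ) = n + k

instance (n : ℕ) (i : Fin (2 * n - 1)) : DecidablePred (IsPartner n i) :=
  fun k => inferInstanceAs (Decidable ((k : ℕ) = n + i ∨ (i : ℕ) = n + k))

theorem card_filter_isPartner_le_one (i : Fin (2 * n - 1)) (s : Finset (Fin (2 * n - 1))) :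
    (s.filter (IsPartner n i)).card ≤ 1 := by
  refine card_le_one.2 fun a ha b hb => ?_
  simp only [mem_filter, IsPartner] at ha hb
  have := a.isLt; have := b.isLt
  exact Fin.ext (by omega)

theorem card_filter_isPartner_or_le_two (i i' : Fin (2 * n - 1)) (s : Finset (Fin (2 * n - 1))) :
    (s.filter fun k => IsPartner n i k ∨ IsPartner n i' k).card ≤ 2 := by
  rw [filter_or]
  exact (card_union_le _ _).trans
    (add_le_add (card_filter_isPartner_le_one i s) (card_filter_isPartner_le_one i' s))

theorem nonempty_erase_alphaIdx (hn : 2 ≤ n) (j : Fin (2 * n - 1)) :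
    ((alphaIdx n).erase j).Nonempty := by
  have := pred_card_le_card_erase (s := alphaIdx n) (a := j)
  rw [card_alphaIdx (by omega)] at this
  exact card_pos.1 (by omega)

theorem nonempty_erase_betaIdx (hn : 3 ≤ n) (j : Fin (2 * n - 1)) :
    ((betaIdx n).erase j).Nonempty := by
  have := pred_card_le_card_erase (s := betaIdx n) (a := j)
  rw [card_betaIdx (by omega)] at this
  exact card_pos.1 (by omega)

end Blocks

noncomputable def crossSum (n : ℕ) (M : Matrix (Fin (2 * n - 1)) (Fin (2 * n - 1)) ℝ)
    (i : Fin (2 * n - 1)) : ℝ :=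
  ∑ k ∈ oppBlock n i, M i k

namespace memL
variable {n : ℕ} {bL bU : ℝ} {M : Matrix (Fin (2 * n - 1)) (Fin (2 * n - 1)) ℝ}

theorem symm (hM : memL n bL bU M) (i k : Fin (2 * n - 1)) : M i k = M k i := hM.1 i k

theorem nonneg (hM : memL n bL bU M) (i k : Fin (2 * n - 1)) : 0 ≤ M i k := hM.2.1 i k

theorem apply_eq_zero (hM : memL n bL bU M) {i k : Fin (2 * n - 1)} (hik : i ≠ k)
    (hk : k ∉ oppBlock n i) : M i k = 0 := by
  rw [mem_oppBlock] at hk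
  rcases lt_or_ge (i : ℕ) n with hi | hi
  exacts [hM.2.2.1 i k hi (by omega) hik, hM.2.2.2.1 i k hi (by omega) hik]

theorem le_apply (hM : memL n bL bU M) {i k : Fin (2 * n - 1)} (hk : k ∈ oppBlock n i)
    (hp : ¬ IsPartner n i k) : bL ≤ M i k := by
  rw [mem_oppBlock] at hk
  simp only [IsPartner, not_or] at hp
  rcases lt_or_ge (i : ℕ) n with hi | hi
  · exact (hM.2.2.2.2.2.2.2 i k hi (by omega) hp.1).1
  · rw [hM.symm]; exact (hM.2.2.2.2.2.2.2 k i (by omega) hi hp.2).1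

theorem apply_le (hM : memL n bL bU M) (hbU : 0 ≤ bU) {i k : Fin (2 * n - 1)}
    (hk : k ∈ oppBlock n i) : M i k ≤ bU := by
  rw [mem_oppBlock] at hk
  have := i.isLt; have := k.isLt
  rcases lt_or_ge (i : ℕ) n with hi | hi
  · by_cases hp : (k : ℕ) = n + i
    · rw [hM.2.2.2.2.1 i k (by omega) hp]; exact hbU
    · exact (hM.2.2.2.2.2.2.2 i k hi (by omega) hp).2
  · rw [hM.symm]
    by_cases hp : (i : ℕ) = n + k
    · rw [hM.2.2.2.2.1 k i (by omega) hp]; exact hbU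
    · exact (hM.2.2.2.2.2.2.2 k i (by omega) hi hp).2

theorem crossSum_eq_sum_ne (hM : memL n bL bU M) (i : Fin (2 * n - 1)) :
    crossSum n M i = ∑ l ∈ univ.filter (· ≠ i), M i l := by
  refine sum_subset (fun k hk => ?_) fun k hk hk' => hM.apply_eq_zero ?_ hk'
  · exact mem_filter.2 ⟨mem_univ k, fun h => notMem_oppBlock_self i (h ▸ hk)⟩
  · exact fun h => (mem_filter.1 hk).2 h.symm

theorem rowExcess_eq (hM : memL n bL bU M) (i : Fin (2 * n - 1)) :
    rowExcess M i = M i i - crossSum n M i := by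
  rw [rowExcess, hM.crossSum_eq_sum_ne]

theorem rowExcess_bounds (hM : memL n bL bU M) {i : Fin (2 * n - 1)} (hi : (i : ℕ) < n) :
    bL ≤ rowExcess M i ∧ rowExcess M i ≤ bU := by
  rw [hM.rowExcess_eq, crossSum, oppBlock_of_lt hi]
  exact hM.2.2.2.2.2.1 i hi

theorem rowExcess_of_le (hM : memL n bL bU M) {i : Fin (2 * n - 1)} (hi : n ≤ (i : ℕ)) :
    rowExcess M i = 0 := by
  rw [hM.rowExcess_eq, crossSum, oppBlock_of_le hi, hM.2.2.2.2.2.2.1 i hi, sub_eq_zero]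
  exact sum_congr rfl fun k _ => hM.symm k i

theorem rowExcess_nonneg (hM : memL n bL bU M) (hbL : 0 ≤ bL) (i : Fin (2 * n - 1)) :
    0 ≤ rowExcess M i := by
  rcases lt_or_ge (i : ℕ) n with hi | hi
  exacts [hbL.trans (hM.rowExcess_bounds hi).1, (hM.rowExcess_of_le hi).ge]

theorem bL_le_bU (hM : memL n bL bU M) (hn : 1 ≤ n) : bL ≤ bU :=
  have hi : ((⟨0, by omega⟩ : Fin (2 * n - 1)) : ℕ) < n := by simp; omega
  (hM.rowExcess_bounds hi).1.trans (hM.rowExcess_bounds hi).2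

theorem sum_rowExcess_mul (hM : memL n bL bU M) (f : Fin (2 * n - 1) → ℝ) :
    ∑ k, rowExcess M k * f k = ∑ k ∈ alphaIdx n, rowExcess M k * f k :=
  (sum_subset (subset_univ _) fun k _ hk => by
    rw [hM.rowExcess_of_le (by simpa using hk), zero_mul]).symm

theorem sum_alphaIdx_rowExcess (hM : memL n bL bU M) :
    ∑ k ∈ alphaIdx n, rowExcess M k = excessSum M := by
  have := hM.sum_rowExcess_mul fun _ => 1
  simp only [mul_one] at this
  rw [excessSum, this]

theorem excessSum_ge (hM : memL n bL bU M) (hn : 1 ≤ n) : n * bL ≤ excessSum M := by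
  have := card_nsmul_le_sum (alphaIdx n) (rowExcess M) bL
    fun k hk => (hM.rowExcess_bounds (mem_alphaIdx.1 hk)).1
  rwa [card_alphaIdx hn, nsmul_eq_mul, hM.sum_alphaIdx_rowExcess] at this

theorem crossSum_ge (hM : memL n bL bU M) (hn : 1 ≤ n) (hbL : 0 ≤ bL) (i : Fin (2 * n - 1)) :
    ((n : ℝ) - 2) * bL ≤ crossSum n M i := by
  have := card_sub_mul_le_sum (IsPartner n i) hbL (fun k _ => hM.nonneg i k)
    (fun k hk hp => hM.le_apply hk hp) (card_filter_isPartner_le_one i _)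
  have hcard := (card_oppBlock_bounds hn i).1
  rw [crossSum]
  push_cast at this
  nlinarith

theorem crossSum_le (hM : memL n bL bU M) (hn : 1 ≤ n) (hbU : 0 ≤ bU) (i : Fin (2 * n - 1)) :
    crossSum n M i ≤ n * bU := by
  have := sum_le_card_nsmul (oppBlock n i) (M i) bU fun k hk => hM.apply_le hbU hk
  rw [nsmul_eq_mul] at this
  exact this.trans (mul_le_mul_of_nonneg_right (card_oppBlock_bounds hn i).2 hbU)

end memL

def blockSign (n : ℕ) (i : Fin (2 * n - 1)) : ℝ := if (i : ℕ) < n then 1 else -1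

theorem blockSign_mul_self {n : ℕ} (i : Fin (2 * n - 1)) : blockSign n i * blockSign n i = 1 := by
  unfold blockSign; split_ifs <;> norm_num

noncomputable def signedMatrix (n : ℕ) (M : Matrix (Fin (2 * n - 1)) (Fin (2 * n - 1)) ℝ) :
    Matrix (Fin (2 * n - 1)) (Fin (2 * n - 1)) ℝ :=
  diagonal (blockSign n) * M * diagonal (blockSign n)

def crossPart (n : ℕ) (M : Matrix (Fin (2 * n - 1)) (Fin (2 * n - 1)) ℝ) :
    Matrix (Fin (2 * n - 1)) (Fin (2 * n - 1)) ℝ :=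
  of fun i k => if k ∈ oppBlock n i then M i k else 0

theorem sum_crossPart_mul {n : ℕ} (M : Matrix (Fin (2 * n - 1)) (Fin (2 * n - 1)) ℝ)
    (i : Fin (2 * n - 1)) (f : Fin (2 * n - 1) → ℝ) :
    ∑ k, crossPart n M i k * f k = ∑ k ∈ oppBlock n i, M i k * f k := by
  simp only [crossPart, of_apply, ite_mul, zero_mul, sum_ite_mem, univ_inter]

theorem sum_crossPart {n : ℕ} (M : Matrix (Fin (2 * n - 1)) (Fin (2 * n - 1)) ℝ)
    (i : Fin (2 * n - 1)) : ∑ k, crossPart n M i k = crossSum n M i := by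
  rw [crossSum]
  simpa using sum_crossPart_mul M i fun _ => 1

namespace memL
variable {n : ℕ} {bL bU : ℝ} {M : Matrix (Fin (2 * n - 1)) (Fin (2 * n - 1)) ℝ}

theorem crossPart_isSymm (hM : memL n bL bU M) : (crossPart n M).IsSymm := by
  ext i k
  simp only [transpose_apply, crossPart, of_apply, mem_oppBlock, hM.symm k i]
  split_ifs <;> first | rfl | (exfalso; grind)

theorem signedMatrix_eq (hM : memL n bL bU M) :
    signedMatrix n M
      = diagonal (fun i => rowExcess M i + ∑ k, crossPart n M i k) - crossPart n M := by
  ext i k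
  rw [signedMatrix, mul_diagonal, diagonal_mul, Matrix.sub_apply, diagonal_apply]
  by_cases hik : i = k
  · subst hik
    rw [sum_crossPart]
    simp only [if_true, hM.rowExcess_eq, crossPart, of_apply,
      if_neg (notMem_oppBlock_self i)]
    linear_combination M i i * blockSign_mul_self i
  · rw [if_neg hik, zero_sub, crossPart, of_apply]
    split_ifs with hk
    · rw [mem_oppBlock] at hk
      unfold blockSign; split_ifs <;> first | ring1 | (exfalso; grind)
    · rw [hM.apply_eq_zero hik hk]; ring

theorem signedMatrix_mulVec_apply (hM : memL n bL bU M) (v : Fin (2 * n - 1) → ℝ)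
    (i : Fin (2 * n - 1)) :
    (signedMatrix n M *ᵥ v) i = M i i * v i - ∑ k ∈ oppBlock n i, M i k * v k := by
  rw [hM.signedMatrix_eq, diagonal_sub_mulVec_apply, sum_crossPart_mul, sum_crossPart,
    hM.rowExcess_eq, sub_add_cancel]

theorem signedMatrix_isSymm (hM : memL n bL bU M) : (signedMatrix n M).IsSymm := by
  rw [hM.signedMatrix_eq]
  exact (isSymm_diagonal _).sub hM.crossPart_isSymm

theorem dotProduct_signedMatrix_mulVec (hM : memL n bL bU M) (x : Fin (2 * n - 1) → ℝ) :
    x ⬝ᵥ signedMatrix n M *ᵥ x = ∑ i, rowExcess M i * x i ^ 2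
      + (∑ i, ∑ k ∈ oppBlock n i, M i k * (x i - x k) ^ 2) / 2 := by
  rw [hM.signedMatrix_eq, dotProduct_laplacian_mulVec hM.crossPart_isSymm]
  simp only [sum_crossPart_mul]

theorem bL_mul_sum_sq_le (hM : memL n bL bU M) (x : Fin (2 * n - 1) → ℝ) :
    bL * ∑ k ∈ alphaIdx n, x k ^ 2 ≤ x ⬝ᵥ signedMatrix n M *ᵥ x := by
  rw [hM.dotProduct_signedMatrix_mulVec, hM.sum_rowExcess_mul, mul_sum]
  have hcross : 0 ≤ ∑ i, ∑ k ∈ oppBlock n i, M i k * (x i - x k) ^ 2 :=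
    sum_nonneg fun i _ => sum_nonneg fun k _ => mul_nonneg (hM.nonneg i k) (sq_nonneg _)
  have hexc : ∑ k ∈ alphaIdx n, bL * x k ^ 2 ≤ ∑ k ∈ alphaIdx n, rowExcess M k * x k ^ 2 :=
    sum_le_sum fun k hk => mul_le_mul_of_nonneg_right
      (hM.rowExcess_bounds (mem_alphaIdx.1 hk)).1 (sq_nonneg _)
  linarith

theorem sum_mul_sq_sub_le (hM : memL n bL bU M) (hbL : 0 ≤ bL) (x : Fin (2 * n - 1) → ℝ)
    (j : Fin (2 * n - 1)) :
    ∑ k ∈ oppBlock n j, M j k * (x j - x k) ^ 2 ≤ 2 * (x ⬝ᵥ signedMatrix n M *ᵥ x) := by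
  rw [hM.dotProduct_signedMatrix_mulVec]
  have hrow : ∑ k ∈ oppBlock n j, M j k * (x j - x k) ^ 2
      ≤ ∑ i, ∑ k ∈ oppBlock n i, M i k * (x i - x k) ^ 2 :=
    single_le_sum (f := fun i => ∑ k ∈ oppBlock n i, M i k * (x i - x k) ^ 2)
      (fun i _ => sum_nonneg fun k _ => mul_nonneg (hM.nonneg i k) (sq_nonneg _)) (mem_univ j)
  have hexc : 0 ≤ ∑ i, rowExcess M i * x i ^ 2 :=
    sum_nonneg fun i _ => mul_nonneg (hM.rowExcess_nonneg hbL i) (sq_nonneg _)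
  linarith

theorem card_sub_one_mul_sq_le (hM : memL n bL bU M) (hbL : 0 ≤ bL) (x : Fin (2 * n - 1) → ℝ)
    (j : Fin (2 * n - 1)) :
    (((oppBlock n j).card : ℝ) - 1) * (bL * x j ^ 2)
      ≤ 4 * (x ⬝ᵥ signedMatrix n M *ᵥ x) + 2 * ∑ k ∈ oppBlock n j, bL * x k ^ 2 := by
  have hpoint : ∀ k ∈ oppBlock n j, ¬ IsPartner n j k →
      bL * x j ^ 2 ≤ 2 * (M j k * (x j - x k) ^ 2) + 2 * (bL * x k ^ 2) := by
    intro k hk hp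
    have := mul_le_mul_of_nonneg_right (hM.le_apply hk hp) (sq_nonneg (x j - x k))
    nlinarith [sq_nonneg (x j - 2 * x k)]
  have hcount := card_sub_mul_le_sum (IsPartner n j) (by positivity)
    (fun k _ => by have := hM.nonneg j k; positivity) hpoint (card_filter_isPartner_le_one j _)
  rw [sum_add_distrib, ← mul_sum, ← mul_sum] at hcount
  push_cast at hcount
  linarith [hM.sum_mul_sq_sub_le hbL x j]

theorem mul_sq_le_of_le (hM : memL n bL bU M) (hn : 1 ≤ n) (hbL : 0 ≤ bL)
    (x : Fin (2 * n - 1) → ℝ) {j : Fin (2 * n - 1)} (hj : n ≤ (j : ℕ)) :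
    ((n : ℝ) - 1) * (bL * x j ^ 2) ≤ 6 * (x ⬝ᵥ signedMatrix n M *ᵥ x) := by
  have := hM.card_sub_one_mul_sq_le hbL x j
  rw [oppBlock_of_le hj, card_alphaIdx hn, ← mul_sum] at this
  linarith [hM.bL_mul_sum_sq_le x]

theorem mul_sq_le (hM : memL n bL bU M) (hn : 2 ≤ n) (hbL : 0 ≤ bL)
    (x : Fin (2 * n - 1) → ℝ) (j : Fin (2 * n - 1)) :
    ((n : ℝ) - 2) * (bL * x j ^ 2) ≤ 16 * (x ⬝ᵥ signedMatrix n M *ᵥ x) := by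
  have hn' : (2 : ℝ) ≤ n := by exact_mod_cast hn
  have hQ : 0 ≤ x ⬝ᵥ signedMatrix n M *ᵥ x :=
    (mul_nonneg hbL (sum_nonneg fun _ _ => sq_nonneg _)).trans (hM.bL_mul_sum_sq_le x)
  rcases lt_or_ge (j : ℕ) n with hj | hj
  · have hβ : ((n : ℝ) - 1) * ∑ k ∈ betaIdx n, bL * x k ^ 2
        ≤ ((n : ℝ) - 1) * (6 * (x ⬝ᵥ signedMatrix n M *ᵥ x)) := by
      have := sum_le_card_nsmul (betaIdx n) (fun k => ((n : ℝ) - 1) * (bL * x k ^ 2)) _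
        fun k hk => hM.mul_sq_le_of_le (by omega) hbL x (mem_betaIdx.1 hk)
      rw [← mul_sum, card_betaIdx (by omega), nsmul_eq_mul, Nat.cast_sub (by omega)] at this
      simpa using this
    have := hM.card_sub_one_mul_sq_le hbL x j
    rw [oppBlock_of_lt hj, card_betaIdx (by omega), Nat.cast_sub (by omega)] at this
    have := le_of_mul_le_mul_left hβ (by linarith)
    push_cast at *
    linarith
  · nlinarith [hM.mul_sq_le_of_le (by omega) hbL x hj, sq_nonneg (x j)]

theorem mul_sq_le_dotProduct (hM : memL n bL bU M) (hn : 6 ≤ n) (hbL : 0 ≤ bL)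
    (x : Fin (2 * n - 1) → ℝ) (j : Fin (2 * n - 1)) :
    n * bL / 24 * x j ^ 2 ≤ x ⬝ᵥ signedMatrix n M *ᵥ x := by
  have hn' : (6 : ℝ) ≤ n := by exact_mod_cast hn
  nlinarith [hM.mul_sq_le (by omega) hbL x j, mul_nonneg hbL (sq_nonneg (x j))]

theorem isUnit_det_signedMatrix (hM : memL n bL bU M) (hn : 6 ≤ n) (hbL : 0 < bL) :
    IsUnit (signedMatrix n M).det :=
  isUnit_det_of_mul_sq_le_dotProduct_mulVec (by positivity) (hM.mul_sq_le_dotProduct hn hbL.le)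

theorem abs_le_of_signedMatrix_mulVec_eq_single (hM : memL n bL bU M) (hn : 6 ≤ n)
    (hbL : 0 < bL) {v : Fin (2 * n - 1) → ℝ} {j : Fin (2 * n - 1)}
    (hv : signedMatrix n M *ᵥ v = Pi.single j 1) (i : Fin (2 * n - 1)) :
    |v i| ≤ 24 / (n * bL) := by
  have hn0 : (0 : ℝ) < n := Nat.cast_pos.2 (by omega)
  simpa [one_div_div] using
    abs_le_of_mulVec_eq_single (by positivity) (hM.mul_sq_le_dotProduct hn hbL.le) hv i

end memL

noncomputable def crossWeight (n : ℕ) (M : Matrix (Fin (2 * n - 1)) (Fin (2 * n - 1)) ℝ)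
    (i k : Fin (2 * n - 1)) : ℝ :=
  M i k / crossSum n M i

namespace memL
variable {n : ℕ} {bL bU : ℝ} {M : Matrix (Fin (2 * n - 1)) (Fin (2 * n - 1)) ℝ}

theorem crossSum_pos (hM : memL n bL bU M) (hn : 3 ≤ n) (hbL : 0 < bL) (i : Fin (2 * n - 1)) :
    0 < crossSum n M i := by
  have hn' : (3 : ℝ) ≤ n := by exact_mod_cast hn
  nlinarith [hM.crossSum_ge (by omega) hbL.le i]

theorem crossSum_le_diag (hM : memL n bL bU M) (hbL : 0 ≤ bL) (i : Fin (2 * n - 1)) :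
    crossSum n M i ≤ M i i := by
  linarith [hM.rowExcess_eq i, hM.rowExcess_nonneg hbL i]

theorem diag_pos (hM : memL n bL bU M) (hn : 3 ≤ n) (hbL : 0 < bL) (i : Fin (2 * n - 1)) :
    0 < M i i :=
  (hM.crossSum_pos hn hbL i).trans_le (hM.crossSum_le_diag hbL.le i)

theorem mul_le_two_mul_crossSum (hM : memL n bL bU M) (hn : 4 ≤ n) (hbL : 0 < bL)
    (i : Fin (2 * n - 1)) : n * bL ≤ 2 * crossSum n M i := by
  have hn' : (4 : ℝ) ≤ n := by exact_mod_cast hn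
  nlinarith [hM.crossSum_ge (by omega) hbL.le i]

theorem crossWeight_nonneg (hM : memL n bL bU M) (hn : 3 ≤ n) (hbL : 0 < bL)
    (i k : Fin (2 * n - 1)) : 0 ≤ crossWeight n M i k :=
  div_nonneg (hM.nonneg i k) (hM.crossSum_pos (by omega) hbL i).le

theorem sum_crossWeight (hM : memL n bL bU M) (hn : 3 ≤ n) (hbL : 0 < bL)
    (i : Fin (2 * n - 1)) : ∑ k ∈ oppBlock n i, crossWeight n M i k = 1 := by
  unfold crossWeight
  rw [← sum_div, ← crossSum, div_self (hM.crossSum_pos (by omega) hbL i).ne']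

theorem crossWeight_le (hM : memL n bL bU M) (hn : 4 ≤ n) (hbL : 0 < bL)
    {i k : Fin (2 * n - 1)} (hk : k ∈ oppBlock n i) :
    crossWeight n M i k ≤ 2 * bU / (n * bL) := by
  have hbU := hbL.trans_le (hM.bL_le_bU (by omega))
  have hn0 : (0 : ℝ) < n := Nat.cast_pos.2 (by omega)
  rw [crossWeight, div_le_div_iff₀ (hM.crossSum_pos (by omega) hbL i) (by positivity)]
  calc M i k * (n * bL) ≤ bU * (n * bL) :=
        mul_le_mul_of_nonneg_right (hM.apply_le hbU.le hk) (by positivity)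
    _ ≤ bU * (2 * crossSum n M i) :=
        mul_le_mul_of_nonneg_left (hM.mul_le_two_mul_crossSum (by omega) hbL i) hbU.le
    _ = 2 * bU * crossSum n M i := by ring

theorem rowExcess_div_diag_le (hM : memL n bL bU M) (hn : 4 ≤ n) (hbL : 0 < bL)
    (i : Fin (2 * n - 1)) : rowExcess M i / M i i ≤ 2 * bU / (n * bL) := by
  have hbU := hbL.trans_le (hM.bL_le_bU (by omega))
  have hn0 : (0 : ℝ) < n := Nat.cast_pos.2 (by omega)
  have hexc : rowExcess M i ≤ bU := by
    rcases lt_or_ge (i : ℕ) n with hi | hi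
    exacts [(hM.rowExcess_bounds hi).2, (hM.rowExcess_of_le hi).trans_le hbU.le]
  rw [div_le_div_iff₀ (hM.diag_pos (by omega) hbL i) (by positivity)]
  calc rowExcess M i * (n * bL) ≤ bU * (n * bL) := mul_le_mul_of_nonneg_right hexc (by positivity)
    _ ≤ bU * (2 * M i i) := mul_le_mul_of_nonneg_left (by
        linarith [hM.mul_le_two_mul_crossSum (by omega) hbL i, hM.crossSum_le_diag hbL.le i]) hbU.le
    _ = 2 * bU * M i i := by ring

/-- Two rows of the same block give weight at least `b_L / (n b_U)` to each of the at least
`n - 3` indices that are a partner of neither. -/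
theorem le_sum_min_crossWeight (hM : memL n bL bU M) (hn : 6 ≤ n) (hbL : 0 < bL)
    {i i' : Fin (2 * n - 1)} (hii' : oppBlock n i = oppBlock n i') :
    bL / (2 * bU) ≤ ∑ k ∈ oppBlock n i, min (crossWeight n M i k) (crossWeight n M i' k) := by
  have hbU := hbL.trans_le (hM.bL_le_bU (by omega))
  have hn' : (6 : ℝ) ≤ n := by exact_mod_cast hn
  have hlow : ∀ {a k : Fin (2 * n - 1)}, k ∈ oppBlock n a → ¬ IsPartner n a k →
      bL / (n * bU) ≤ crossWeight n M a k := fun {a k} hk hp => by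
    rw [crossWeight, div_le_div_iff₀ (by positivity) (hM.crossSum_pos (by omega) hbL a)]
    calc bL * crossSum n M a ≤ bL * (n * bU) :=
          mul_le_mul_of_nonneg_left (hM.crossSum_le (by omega) hbU.le a) hbL.le
      _ ≤ M a k * (n * bU) := mul_le_mul_of_nonneg_right (hM.le_apply hk hp) (by positivity)
  have hcount := card_sub_mul_le_sum (fun k => IsPartner n i k ∨ IsPartner n i' k)
    (by positivity) (fun k _ => le_min (hM.crossWeight_nonneg (by omega) hbL i k)
      (hM.crossWeight_nonneg (by omega) hbL i' k))
    (fun k hk hp => le_min (hlow hk (not_or.1 hp).1) (hlow (hii' ▸ hk) (not_or.1 hp).2))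
    (card_filter_isPartner_or_le_two i i' _)
  have hcard := (card_oppBlock_bounds (by omega) i).1
  refine le_trans ?_ hcount
  have h : ((#(oppBlock n i) : ℝ) - (2 : ℕ)) * (bL / (n * bU))
      = bL / (2 * bU) * (2 * (#(oppBlock n i) - 2) / n) := by
    push_cast
    field_simp
  rw [h]
  refine le_mul_of_one_le_right (by positivity) ?_
  rw [one_le_div (by positivity)]
  linarith

end memL

theorem approxS_apply {n : ℕ} (M : Matrix (Fin (2 * n - 1)) (Fin (2 * n - 1)) ℝ)
    (i j : Fin (2 * n - 1)) :
    approxS n M i j = blockSign n i * blockSign n j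
      * ((if i = j then 1 / M i i else 0) + 1 / excessSum M) := by
  show (if ((i : ℕ) < n ∧ (j : ℕ) < n) ∨ (n ≤ (i : ℕ) ∧ n ≤ (j : ℕ)) then
      (if i = j then 1 / M i i else 0) + 1 / excessSum M else -(1 / excessSum M)) = _
  unfold blockSign
  split_ifs <;> first | ring1 | (exfalso; omega)

namespace memL
variable {n : ℕ} {bL bU : ℝ} {M : Matrix (Fin (2 * n - 1)) (Fin (2 * n - 1)) ℝ}
  {v : Fin (2 * n - 1) → ℝ} {j : Fin (2 * n - 1)}

theorem eq_of_signedMatrix_mulVec_eq_single (hM : memL n bL bU M) (hn : 3 ≤ n) (hbL : 0 < bL)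
    (hv : signedMatrix n M *ᵥ v = Pi.single j 1) (i : Fin (2 * n - 1)) :
    v i = (if i = j then 1 / M i i else 0)
      + (1 - rowExcess M i / M i i) * ∑ k ∈ oppBlock n i, crossWeight n M i k * v k := by
  have h := congrFun hv i
  rw [hM.signedMatrix_mulVec_apply, Pi.single_apply] at h
  have hd := (hM.diag_pos hn hbL i).ne'
  have hc := (hM.crossSum_pos hn hbL i).ne'
  simp_rw [crossWeight, div_mul_eq_mul_div, ← sum_div]
  rw [hM.rowExcess_eq]
  split_ifs at h ⊢ <;> field_simp <;> linear_combination crossSum n M i * h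

theorem sum_rowExcess_mul_eq_one (hM : memL n bL bU M)
    (hv : signedMatrix n M *ᵥ v = Pi.single j 1) : ∑ k, rowExcess M k * v k = 1 := by
  have hrow : (fun _ => 1) ᵥ* signedMatrix n M = rowExcess M := by
    ext k
    rw [← hM.signedMatrix_isSymm.eq, vecMul_transpose, hM.signedMatrix_mulVec_apply,
      hM.rowExcess_eq, crossSum]
    simp
  have := dotProduct_mulVec (fun _ => (1 : ℝ)) (signedMatrix n M) v
  rw [hv, hrow] at this
  simpa [dotProduct] using this.symm

theorem sub_le_of_oppBlock_eq (hM : memL n bL bU M) (hn : 6 ≤ n) (hbL : 0 < bL)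
    (hv : signedMatrix n M *ᵥ v = Pi.single j 1) {i i' : Fin (2 * n - 1)}
    (hii' : oppBlock n i = oppBlock n i') (hij : i ≠ j) (hi'j : i' ≠ j) {m m' : Fin (2 * n - 1)}
    (hm : m ∈ (oppBlock n i).erase j)
    (hrange : ∀ k ∈ (oppBlock n i).erase j, v m' ≤ v k ∧ v k ≤ v m) :
    v i - v i' ≤ (1 - bL / (2 * bU)) * (v m - v m')
      + 4 * (2 * bU / (n * bL)) * (24 / (n * bL)) := by
  have hn3 : 3 ≤ n := by omega
  have hn4 : 4 ≤ n := by omega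
  set ε := 2 * bU / (n * bL)
  set K := 24 / (n * bL)
  have hK := hM.abs_le_of_signedMatrix_mulVec_eq_single hn hbL hv
  have hε : 0 ≤ ε := (hM.crossWeight_nonneg hn3 hbL i m).trans
    (hM.crossWeight_le hn4 hbL (mem_erase.1 hm).2)
  set A := fun a => ∑ k ∈ oppBlock n a, crossWeight n M a k * v k
  have hA : ∀ a, |A a| ≤ K := fun a => abs_sum_mul_le_of_sum_eq_one
    (fun k _ => hM.crossWeight_nonneg hn3 hbL a k) (hM.sum_crossWeight hn3 hbL a) fun k _ => hK k
  have hκA : ∀ a, |rowExcess M a / M a a * A a| ≤ ε * K := fun a => by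
    rw [abs_mul, abs_of_nonneg
      (div_nonneg (hM.rowExcess_nonneg hbL.le a) (hM.diag_pos hn3 hbL a).le)]
    exact mul_le_mul (hM.rowExcess_div_diag_le hn4 hbL a) (hA a) (abs_nonneg _) hε
  have hAA : A i - A i' ≤ (1 - bL / (2 * bU)) * (v m - v m') + ε * |v j - v m'| := by
    simp only [A, ← hii', ← sum_sub_distrib, ← sub_mul]
    exact sum_sub_mul_le_of_overlap_of_ne (fun k _ => hM.crossWeight_nonneg hn3 hbL i k)
      (fun k _ => hM.crossWeight_nonneg hn3 hbL i' k) (hM.sum_crossWeight hn3 hbL i)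
      (hii' ▸ hM.sum_crossWeight hn3 hbL i') j (fun k hk => hM.crossWeight_le hn4 hbL hk)
      (fun k hk => hM.crossWeight_le hn4 hbL (hii' ▸ hk))
      ((hrange m hm).1.trans (hrange m hm).2)
      (fun k hk hkj => hrange k (mem_erase.2 ⟨hkj, hk⟩)) (hM.le_sum_min_crossWeight hn hbL hii')
  have hcol : ∀ a, a ≠ j → v a = A a - rowExcess M a / M a a * A a := fun a ha => by
    rw [hM.eq_of_signedMatrix_mulVec_eq_single hn3 hbL hv a, if_neg ha]; ring
  have hvj : ε * |v j - v m'| ≤ ε * (2 * K) := mul_le_mul_of_nonneg_left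
    ((abs_sub _ _).trans (by linarith [hK j, hK m'])) hε
  rw [hcol i hij, hcol i' hi'j]
  linarith [(abs_le.1 (hκA i)).1, (abs_le.1 (hκA i')).2]

theorem sub_le_of_mem_erase_alphaIdx (hM : memL n bL bU M) (hn : 6 ≤ n) (hbL : 0 < bL)
    (hv : signedMatrix n M *ᵥ v = Pi.single j 1) {i i' : Fin (2 * n - 1)}
    (hi : i ∈ (alphaIdx n).erase j) (hi' : i' ∈ (alphaIdx n).erase j) :
    v i - v i' ≤ 4 * (2 * bU / (n * bL)) * (24 / (n * bL)) / (bL / (2 * bU)) := by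
  have hbU := hbL.trans_le (hM.bL_le_bU (by omega))
  have hopp : ∀ a ∈ (alphaIdx n).erase j, oppBlock n a = betaIdx n := fun a ha =>
    oppBlock_of_lt (mem_alphaIdx.1 (mem_erase.1 ha).2)
  have hopp' : ∀ b ∈ (betaIdx n).erase j, oppBlock n b = alphaIdx n := fun b hb =>
    oppBlock_of_le (mem_betaIdx.1 (mem_erase.1 hb).2)
  refine sub_le_div_of_two_block_contraction (nonempty_erase_alphaIdx (by omega) j)
    (nonempty_erase_betaIdx (by omega) j) (by positivity)
    (div_le_one_of_le₀ (by linarith [hM.bL_le_bU (by omega)]) (by positivity)) ?_ ?_ i hi i' hi'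
  · intro b hb b' _ hrange a ha a' ha'
    refine hM.sub_le_of_oppBlock_eq hn hbL hv ((hopp a ha).trans (hopp a' ha').symm)
      (mem_erase.1 ha).1 (mem_erase.1 ha').1 ?_ ?_ <;> rw [hopp a ha]
    exacts [hb, hrange]
  · intro a ha a' _ hrange b hb b' hb'
    refine hM.sub_le_of_oppBlock_eq hn hbL hv ((hopp' b hb).trans (hopp' b' hb').symm)
      (mem_erase.1 hb).1 (mem_erase.1 hb').1 ?_ ?_ <;> rw [hopp' b hb]
    exacts [ha, hrange]

theorem excessSum_pos (hM : memL n bL bU M) (hn : 1 ≤ n) (hbL : 0 < bL) : 0 < excessSum M :=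
  (mul_pos (Nat.cast_pos.2 hn) hbL).trans_le (hM.excessSum_ge hn)

theorem inv_excessSum_le (hM : memL n bL bU M) (hn : 1 ≤ n) (hbL : 0 < bL) :
    1 / excessSum M ≤ 24 / (n * bL) := by
  have hn0 : (0 : ℝ) < n := Nat.cast_pos.2 hn
  calc 1 / excessSum M ≤ 1 / (n * bL) :=
        one_div_le_one_div_of_le (by positivity) (hM.excessSum_ge hn)
    _ ≤ 24 / (n * bL) := div_le_div_of_nonneg_right (by norm_num) (by positivity)

/-- `1 / excessSum M` is the `rowExcess`-weighted average of `v` over the first block. -/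
theorem abs_sub_inv_excessSum_le_of_mem_erase_alphaIdx (hM : memL n bL bU M) (hn : 6 ≤ n)
    (hbL : 0 < bL) (hv : signedMatrix n M *ᵥ v = Pi.single j 1) {i : Fin (2 * n - 1)}
    (hi : i ∈ (alphaIdx n).erase j) :
    |v i - 1 / excessSum M| ≤ 4 * (2 * bU / (n * bL)) * (24 / (n * bL)) / (bL / (2 * bU))
      + 2 * (2 * bU / (n * bL) * (24 / (n * bL))) := by
  have hbU := hbL.trans_le (hM.bL_le_bU (by omega))
  have hn0 : (0 : ℝ) < n := Nat.cast_pos.2 (by omega)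
  have hs := hM.excessSum_pos (by omega) hbL
  have hK := hM.abs_le_of_signedMatrix_mulVec_eq_single hn hbL hv
  have hmean := hM.sum_rowExcess_mul_eq_one hv
  rw [hM.sum_rowExcess_mul] at hmean
  have hsumα := hM.sum_alphaIdx_rowExcess
  have hsum : ∑ k ∈ alphaIdx n, rowExcess M k / excessSum M = 1 := by
    rw [← sum_div, hsumα, div_self hs.ne']
  have hdev : v i - 1 / excessSum M
      = ∑ k ∈ alphaIdx n, rowExcess M k / excessSum M * (v i - v k) := by
    simp only [mul_sub, sum_sub_distrib, ← sum_mul, div_mul_eq_mul_div, ← sum_div, hmean, hsumα]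
    field_simp
  rw [hdev, mul_left_comm]
  refine abs_sum_mul_le_of_sum_eq_one_of_ne (fun k _ => div_nonneg
    (hM.rowExcess_nonneg hbL.le k) hs.le) hsum j (fun k hk => ?_) (by positivity)
    (fun k hk hkj => abs_sub_le_iff.2 ⟨?_, ?_⟩)
    ((abs_sub _ _).trans (by linarith [hK i, hK j]))
  · rw [div_le_div_iff₀ hs (by positivity)]
    nlinarith [mul_le_mul_of_nonneg_right (hM.rowExcess_bounds (mem_alphaIdx.1 hk)).2
      (by positivity : (0 : ℝ) ≤ n * bL),
      mul_le_mul_of_nonneg_left (hM.excessSum_ge (by omega)) hbU.le]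
  · exact hM.sub_le_of_mem_erase_alphaIdx hn hbL hv hi (mem_erase.2 ⟨hkj, hk⟩)
  · exact hM.sub_le_of_mem_erase_alphaIdx hn hbL hv (mem_erase.2 ⟨hkj, hk⟩) hi

theorem abs_sub_le_of_forall_mem_oppBlock (hM : memL n bL bU M) (hn : 6 ≤ n) (hbL : 0 < bL)
    (hv : signedMatrix n M *ᵥ v = Pi.single j 1) (i : Fin (2 * n - 1)) {C : ℝ} (hC0 : 0 ≤ C)
    (hC : ∀ k ∈ oppBlock n i, k ≠ j → |v k - 1 / excessSum M| ≤ C) :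
    |v i - (if i = j then 1 / M i i else 0) - 1 / excessSum M|
      ≤ C + 3 * (2 * bU / (n * bL) * (24 / (n * bL))) := by
  have hn3 : 3 ≤ n := by omega
  have hn4 : 4 ≤ n := by omega
  set ε := 2 * bU / (n * bL)
  set K := 24 / (n * bL)
  set s := excessSum M
  have hbU := hbL.trans_le (hM.bL_le_bU (by omega))
  have hK := hM.abs_le_of_signedMatrix_mulVec_eq_single hn hbL hv
  have hsK := hM.inv_excessSum_le (by omega) hbL
  have hs := hM.excessSum_pos (by omega) hbL
  set κ := rowExcess M i / M i i
  have hκ0 : 0 ≤ κ := div_nonneg (hM.rowExcess_nonneg hbL.le i) (hM.diag_pos hn3 hbL i).le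
  have hκ1 : κ ≤ 1 := div_le_one_of_le₀ (by linarith [hM.rowExcess_eq i,
    (hM.crossSum_pos hn3 hbL i).le]) (hM.diag_pos hn3 hbL i).le
  have hκε : κ ≤ ε := hM.rowExcess_div_diag_le hn4 hbL i
  have hdev : |∑ k ∈ oppBlock n i, crossWeight n M i k * (v k - 1 / s)| ≤ C + ε * (2 * K) :=
    abs_sum_mul_le_of_sum_eq_one_of_ne (fun k _ => hM.crossWeight_nonneg hn3 hbL i k)
      (hM.sum_crossWeight hn3 hbL i) j (fun k hk => hM.crossWeight_le hn4 hbL hk) hC0 hC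
      ((abs_sub _ _).trans (by rw [abs_of_pos (one_div_pos.2 hs)]; linarith [hK j]))
  have hsplit : v i - (if i = j then 1 / M i i else 0) - 1 / s
      = (1 - κ) * ∑ k ∈ oppBlock n i, crossWeight n M i k * (v k - 1 / s) - κ * (1 / s) := by
    rw [hM.eq_of_signedMatrix_mulVec_eq_single hn3 hbL hv i]
    simp only [mul_sub, sum_sub_distrib, ← sum_mul, hM.sum_crossWeight hn3 hbL i]
    ring
  rw [hsplit]
  refine (abs_sub _ _).trans ?_
  rw [abs_mul, abs_mul, abs_of_nonneg (by linarith : 0 ≤ 1 - κ), abs_of_nonneg hκ0,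
    abs_of_pos (one_div_pos.2 hs)]
  have : κ * (1 / s) ≤ ε * K := mul_le_mul hκε hsK (one_div_pos.2 hs).le (by positivity)
  nlinarith [abs_nonneg (∑ k ∈ oppBlock n i, crossWeight n M i k * (v k - 1 / s))]

theorem abs_sub_le_of_signedMatrix_mulVec_eq_single (hM : memL n bL bU M) (hn : 6 ≤ n)
    (hbL : 0 < bL) (hv : signedMatrix n M *ᵥ v = Pi.single j 1) (i : Fin (2 * n - 1)) :
    |v i - (if i = j then 1 / M i i else 0) - 1 / excessSum M|
      ≤ 768 * bU ^ 2 / (bL ^ 3 * n ^ 2) := by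
  set D := 4 * (2 * bU / (n * bL)) * (24 / (n * bL)) / (bL / (2 * bU)) with hD
  set a := 2 * bU / (n * bL) * (24 / (n * bL)) with ha
  have hbU := hbL.trans_le (hM.bL_le_bU (by omega))
  have hn0 : (0 : ℝ) < n := Nat.cast_pos.2 (by omega)
  have ha0 : 0 ≤ a := by positivity
  have hα : ∀ k ∈ alphaIdx n, k ≠ j → |v k - 1 / excessSum M| ≤ D + 2 * a := fun k hk hkj => by
    have := hM.abs_sub_inv_excessSum_le_of_mem_erase_alphaIdx hn hbL hv (mem_erase.2 ⟨hkj, hk⟩)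
    linarith
  have hβ : ∀ k : Fin (2 * n - 1), n ≤ (k : ℕ) →
      |v k - (if k = j then 1 / M k k else 0) - 1 / excessSum M| ≤ D + 5 * a := fun k hk => by
    have := hM.abs_sub_le_of_forall_mem_oppBlock hn hbL hv k (C := D + 2 * a) (by positivity)
      (by rwa [oppBlock_of_le hk])
    linarith
  have hbound : |v i - (if i = j then 1 / M i i else 0) - 1 / excessSum M| ≤ D + 8 * a := by
    rcases lt_or_ge (i : ℕ) n with hi | hi
    · by_cases hij : i = j
      · have := hM.abs_sub_le_of_forall_mem_oppBlock hn hbL hv i (C := D + 5 * a) (by positivity)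
          fun k hk hkj => by
            have := hβ k (mem_betaIdx.1 (oppBlock_of_lt hi ▸ hk))
            rwa [if_neg hkj, sub_zero] at this
        linarith
      · rw [if_neg hij, sub_zero]
        linarith [hα i (mem_alphaIdx.2 hi) hij]
    · linarith [hβ i hi]
  have hD' : D = 384 * (bU ^ 2 / (bL ^ 3 * n ^ 2)) := by rw [hD]; field_simp; ring
  have ha' : 8 * a = 384 * (bU ^ 2 / (bL ^ 3 * n ^ 2)) * (bL / bU) := by rw [ha]; field_simp; ring
  have h8a : 8 * a ≤ 384 * (bU ^ 2 / (bL ^ 3 * n ^ 2)) := by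
    rw [ha']
    exact mul_le_of_le_one_right (by positivity)
      (div_le_one_of_le₀ (hM.bL_le_bU (by omega)) hbU.le)
  rw [mul_div_assoc]
  linarith

theorem abs_inv_sub_approxS_apply_le (hM : memL n bL bU M) (hn : 6 ≤ n) (hbL : 0 < bL)
    (i j : Fin (2 * n - 1)) :
    |(M⁻¹ - approxS n M) i j| ≤ 768 * bU ^ 2 / (bL ^ 3 * ((n : ℝ) - 1) ^ 2) := by
  set v := (signedMatrix n M)⁻¹ *ᵥ Pi.single j 1
  have hv : signedMatrix n M *ᵥ v = Pi.single j 1 := by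
    rw [mulVec_mulVec, mul_nonsing_inv _ (hM.isUnit_det_signedMatrix hn hbL), one_mulVec]
  have hvi : (signedMatrix n M)⁻¹ i j = v i := by simp [v]
  have hσ : |blockSign n i * blockSign n j| = 1 := by
    unfold blockSign; split_ifs <;> norm_num
  have hn1 : (0 : ℝ) < n - 1 := by
    have : (6 : ℝ) ≤ n := by exact_mod_cast hn
    linarith
  rw [Matrix.sub_apply, approxS_apply, inv_apply_eq_mul_inv_diagonal_mul_mul_diagonal
    blockSign_mul_self, ← signedMatrix, hvi,
    show ∀ a b c d : ℝ, a * b * c - a * c * d = a * c * (b - d) from fun _ _ _ _ => by ring,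
    abs_mul, hσ, one_mul, ← sub_sub]
  refine (hM.abs_sub_le_of_signedMatrix_mulVec_eq_single hn hbL hv i).trans
    (div_le_div_of_nonneg_left (by positivity) (by positivity)
      (mul_le_mul_of_nonneg_left ?_ (by positivity)))
  nlinarith

end memL

theorem approx_inverse_error_general (bL bU : ℕ → ℝ)
    (M : (n : ℕ) → Matrix (Fin (2 * n - 1)) (Fin (2 * n - 1)) ℝ)
    (hpos : ∀ n, 0 < bL n ∧ bL n ≤ bU n)
    (hmem : ∀ n, memL n (bL n) (bU n) (M n)) :
    ∃ c₁ : ℝ, 0 < c₁ ∧ ∀ᶠ n : ℕ in atTop, ∀ i j,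
      |((M n)⁻¹ - approxS n (M n)) i j| ≤ c₁ * (bU n) ^ 2 / ((bL n) ^ 3 * ((n : ℝ) - 1) ^ 2) :=
  ⟨768, by norm_num, (eventually_ge_atTop 6).mono fun n hn =>
    (hmem n).abs_inv_sub_approxS_apply_le hn (hpos n).1⟩

/-- Proposition 1 of Yan, Leng and Zhu (2016): for `M ∈ L_n(b_L, b_U)` with `b_U/b_L = o(n)`,
for all large `n` the entrywise error between `M⁻¹` and `S(M)` is at most
`c₁ b_U² / (b_L³ (n-1)²)` for an absolute constant `c₁`. -/
theorem approx_inverse_error (bL bU : ℕ → ℝ)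
    (M : (n : ℕ) → Matrix (Fin (2 * n - 1)) (Fin (2 * n - 1)) ℝ)
    (hpos : ∀ n, 0 < bL n ∧ bL n ≤ bU n)
    (hmem : ∀ n, memL n (bL n) (bU n) (M n))
    (hsmall : Tendsto (fun n : ℕ => bU n / bL n / n) atTop (nhds 0)) :
    ∃ c₁ : ℝ, 0 < c₁ ∧ ∀ᶠ n : ℕ in atTop, ∀ i j,
      |((M n)⁻¹ - approxS n (M n)) i j| ≤ c₁ * (bU n) ^ 2 / ((bL n) ^ 3 * ((n : ℝ) - 1) ^ 2) :=
  approx_inverse_error_general bL bU M hpos hmem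
end

section
/- Let F: D → ℝⁿ be Fréchet differentiable on an open convex set D ⊆ ℝⁿ. Suppose at some x₀ ∈ D the derivative F'(x₀) is invertible, ‖F'(x₀)^{-1}(F'(x) - F'(y))‖ ≤ K‖x - y‖ for all x, y ∈ D, ‖F'(x₀)^{-1} F(x₀)‖ ≤ η, and h := Kη ≤ 1/2, and that the closed ball B̄(x₀, t*) ⊆ D where t* = 2η/(1 + √(1-2h)). Then the Newton iterates x_{k+1} = x_k - F'(x_k)^{-1} F(x_k) are well-defined, remain in B̄(x₀, t*), and converge to a solution x* of F(x) = 0 with ‖x* - x₀‖ ≤ t* and ‖x* - x_k‖ ≤ 2^{1-k}(2h)^{2^k - 1} η for k ≥ 1. -/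
/-
Kantorovich's majorant argument. Newton's method for the scalar quadratic
`φ t = K t² / 2 - t + η`, started at `0`, increases to its smaller root
`t* = 2η / (1 + √(1 - 2Kη))`. By induction the Newton iterates satisfy `‖x_k - x₀‖ ≤ t_k` and
`‖A⁻¹ F x_k‖ ≤ φ t_k`: the Lipschitz bound gives `‖1 - A⁻¹ F'(x_k)‖ ≤ K t_k = 1 + φ'(t_k) < 1`, so
`F'(x_k)` is invertible by a Neumann series with `‖F'(x_k)⁻¹ y‖ ≤ ‖A⁻¹ y‖ / (-φ'(t_k))`, whence
`‖x_{k+1} - x_k‖ ≤ t_{k+1} - t_k`; and the second-order Taylor estimate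
`‖A⁻¹ F x_{k+1}‖ ≤ K/2 ‖x_{k+1} - x_k‖² ≤ φ t_{k+1}` closes the induction. So `(x_k)` is Cauchy
with `‖x* - x_k‖ ≤ t* - t_k`, the residuals tend to `φ t* = 0`, and the quadratic convergence of
the scalar iteration gives the error bound.
-/

open Filter Topology

theorem exists_tendsto_dist_le_of_dist_succ_le_sub {X : Type*} [PseudoMetricSpace X]
    [CompleteSpace X] {x : ℕ → X} {g : ℕ → ℝ} (hg : Tendsto g atTop (𝓝 0))
    (hx : ∀ n, dist (x n) (x (n + 1)) ≤ g n - g (n + 1)) :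
    ∃ a, Tendsto x atTop (𝓝 a) ∧ ∀ n, dist (x n) a ≤ g n := by
  have hchain : ∀ n m, n ≤ m → dist (x n) (x m) ≤ g n - g m := by
    intro n m hnm
    induction m, hnm using Nat.le_induction with
    | base => simp
    | succ m _ ih => linarith [dist_triangle (x n) (x m) (x (m + 1)), hx m]
  have hanti : Antitone g :=
    antitone_nat_of_succ_le fun n => by linarith [hx n, dist_nonneg (x := x n) (y := x (n + 1))]
  have hnonneg : ∀ n, 0 ≤ g n := hanti.le_of_tendsto hg
  have hcauchy : CauchySeq x := by
    refine cauchySeq_of_le_tendsto_0 g (fun n m N hn hm => ?_) hg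
    rcases le_total n m with hnm | hmn
    · linarith [hchain n m hnm, hnonneg m, hanti hn]
    · linarith [hchain m n hmn, dist_comm (x n) (x m), hnonneg n, hanti hm]
  obtain ⟨a, ha⟩ := cauchySeq_tendsto_of_complete hcauchy
  refine ⟨a, ha, fun n => le_of_tendsto (tendsto_const_nhds.dist ha) ?_⟩
  filter_upwards [eventually_ge_atTop n] with m hm
  linarith [hchain n m hm, hnonneg m]

theorem ContinuousLinearEquiv.exists_eq_of_norm_one_sub_symm_comp_le
    {𝕜 E G : Type*} [NontriviallyNormedField 𝕜] [NormedAddCommGroup E] [NormedSpace 𝕜 E]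
    [CompleteSpace E] [NormedAddCommGroup G] [NormedSpace 𝕜 G]
    (A : E ≃L[𝕜] G) {T : E →L[𝕜] G} {u : ℝ}
    (hT : ‖1 - (A.symm : G →L[𝕜] E).comp T‖ ≤ 1 - u) (hu : 0 < u) :
    ∃ B : E ≃L[𝕜] G, (B : E →L[𝕜] G) = T ∧ ∀ y, ‖B.symm y‖ ≤ u⁻¹ * ‖A.symm y‖ := by
  set S := (A.symm : G →L[𝕜] E).comp T
  have hS : ‖1 - S‖ < 1 := by linarith
  let U := Units.oneSub (1 - S) hS
  have hU : (U : E →L[𝕜] E) = S := sub_sub_cancel 1 S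
  have hUinv : ‖(↑U⁻¹ : E →L[𝕜] E)‖ ≤ u⁻¹ := by
    have hone : ‖(1 : E →L[𝕜] E)‖ ≤ 1 := ContinuousLinearMap.norm_id_le
    calc ‖(↑U⁻¹ : E →L[𝕜] E)‖ ≤ ‖(1 : E →L[𝕜] E)‖ - 1 + (1 - ‖1 - S‖)⁻¹ :=
          tsum_geometric_le_of_norm_lt_one _ hS
      _ ≤ u⁻¹ := by grw [hone, hT] <;> simp [hu]
  refine ⟨(ContinuousLinearEquiv.unitsEquiv 𝕜 E U).trans A, ?_, fun y => ?_⟩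
  · ext z
    simp [hU, S]
  · change ‖(↑U⁻¹ : E →L[𝕜] E) (A.symm y)‖ ≤ _
    exact (ContinuousLinearMap.le_opNorm _ _).trans (by gcongr)

theorem Convex.norm_image_sub_sub_fderiv_apply_le {E G : Type*} [NormedAddCommGroup E]
    [NormedSpace ℝ E] [NormedAddCommGroup G] [NormedSpace ℝ G] {s : Set E} (hs : Convex ℝ s)
    {f : E → G} {f' : E → E →L[ℝ] G} (hf : ∀ z ∈ s, HasFDerivAt f (f' z) z)
    {C : ℝ} {x y : E} (hx : x ∈ s) (hy : y ∈ s) (hC : ∀ z ∈ s, ‖f' z - f' x‖ ≤ C * ‖z - x‖) :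
    ‖f y - f x - f' x (y - x)‖ ≤ C / 2 * ‖y - x‖ ^ 2 := by
  set v := y - x
  have hmem : ∀ t ∈ Set.Icc (0 : ℝ) 1, x + t • v ∈ s := fun t ht =>
    hs.add_smul_sub_mem hx hy ht
  set φ : ℝ → G := fun t => f (x + t • v) - f x - t • f' x v
  have hφ : ∀ t ∈ Set.Icc (0 : ℝ) 1, HasDerivAt φ ((f' (x + t • v) - f' x) v) t := by
    intro t ht
    have hline : HasDerivAt (fun t : ℝ => x + t • v) v t := by
      simpa using ((hasDerivAt_id t).smul_const v).const_add x
    have := (((hf _ (hmem t ht)).comp_hasDerivAt t hline).sub_const (f x)).sub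
      ((hasDerivAt_id t).smul_const (f' x v))
    exact this.congr_deriv (by simp)
  have hB : ∀ t, HasDerivAt (fun t : ℝ => C / 2 * t ^ 2 * ‖v‖ ^ 2) (C * t * ‖v‖ ^ 2) t := by
    intro t
    exact (((hasDerivAt_pow 2 t).const_mul (C / 2)).mul_const (‖v‖ ^ 2)).congr_deriv
      (by rw [show 2 - 1 = 1 from rfl]; push_cast; ring)
  have hbound := image_norm_le_of_norm_deriv_right_le_deriv_boundary (a := 0) (b := 1)
    (fun t ht => (hφ t ht).continuousAt.continuousWithinAt)
    (fun t ht => (hφ t (Set.mem_Icc_of_Ico ht)).hasDerivWithinAt)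
    (by simp [φ]) hB (fun t ht => ?_) (Set.right_mem_Icc.2 zero_le_one)
  · simpa [φ, v] using hbound
  · calc ‖(f' (x + t • v) - f' x) v‖ ≤ ‖f' (x + t • v) - f' x‖ * ‖v‖ :=
          ContinuousLinearMap.le_opNorm _ _
      _ ≤ C * ‖t • v‖ * ‖v‖ := by
          gcongr
          simpa using hC _ (hmem t (Set.mem_Icc_of_Ico ht))
      _ = C * t * ‖v‖ ^ 2 := by rw [norm_smul, Real.norm_of_nonneg ht.1]; ring

noncomputable def newtonMap {E G : Type*} [NormedAddCommGroup E] [NormedSpace ℝ E]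
    [NormedAddCommGroup G] [NormedSpace ℝ G] (F : E → G) (F' : E → E →L[ℝ] G) (x : E) : E :=
  x - (F' x).inverse (F x)

noncomputable def newtonSeq {E G : Type*} [NormedAddCommGroup E] [NormedSpace ℝ E]
    [NormedAddCommGroup G] [NormedSpace ℝ G] (F : E → G) (F' : E → E →L[ℝ] G) (x₀ : E)
    (k : ℕ) : E :=
  (newtonMap F F')^[k] x₀

section NewtonMap

variable {E G : Type*} [NormedAddCommGroup E] [NormedSpace ℝ E] [NormedAddCommGroup G]
  [NormedSpace ℝ G] {F : E → G} {F' : E → E →L[ℝ] G}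

theorem newtonMap_eq {x : E} (B : E ≃L[ℝ] G) (hB : (B : E →L[ℝ] G) = F' x) :
    newtonMap F F' x = x - B.symm (F x) := by
  rw [newtonMap, ← hB, ContinuousLinearMap.inverse_equiv, ContinuousLinearEquiv.coe_coe]

theorem newtonSeq_succ (x₀ : E) (k : ℕ) :
    newtonSeq F F' x₀ (k + 1) = newtonMap F F' (newtonSeq F F' x₀ k) :=
  Function.iterate_succ_apply' _ _ _

end NewtonMap

namespace Kantorovich

/- `gap K η s k` is `t* - t_k`, where `s = √(1 - 2Kη) = -φ'(t*)`. In the variable `e = t* - t`,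
`φ (t* - e) = majorant K s e` and `-φ'(t* - e) = s + K e`. -/
noncomputable def gap (K η s : ℝ) : ℕ → ℝ
  | 0 => 2 * η / (1 + s)
  | k + 1 => K * gap K η s k ^ 2 / (2 * (s + K * gap K η s k))

noncomputable def majorant (K s e : ℝ) : ℝ := e * (s + K * e / 2)

variable {K η s : ℝ}

theorem gap_nonneg (hK : 0 ≤ K) (hη : 0 ≤ η) (hs : 0 ≤ s) (k : ℕ) : 0 ≤ gap K η s k := by
  induction k with
  | zero => exact div_nonneg (by linarith) (by linarith)
  | succ k ih => rw [gap]; positivity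

theorem K_mul_gap_zero (hs : 0 ≤ s) (hsq : s ^ 2 = 1 - 2 * (K * η)) :
    K * gap K η s 0 = 1 - s := by
  rw [gap, mul_div_assoc', div_eq_iff (by linarith)]
  linear_combination hsq

theorem majorant_gap_zero (hs : 0 ≤ s) (hsq : s ^ 2 = 1 - 2 * (K * η)) :
    majorant K s (gap K η s 0) = η := by
  have h := K_mul_gap_zero hs hsq
  have h0 : gap K η s 0 * (1 + s) = 2 * η := div_mul_cancel₀ _ (by linarith)
  rw [majorant]
  linear_combination (gap K η s 0 / 2) * h + h0 / 2

theorem half_pow_le_slope (hs : 0 ≤ s) (hsq : s ^ 2 = 1 - 2 * (K * η)) (k : ℕ) :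
    2⁻¹ ^ k ≤ s + K * gap K η s k := by
  induction k with
  | zero => rw [K_mul_gap_zero hs hsq]; simp
  | succ k ih =>
    set a := K * gap K η s k
    have hu : 0 < s + a := lt_of_lt_of_le (by positivity) ih
    have hstep : s + K * gap K η s (k + 1) = s + a ^ 2 / (2 * (s + a)) := by
      rw [gap]; ring
    have hhalf : (s + a) / 2 ≤ s + a ^ 2 / (2 * (s + a)) := by
      rw [div_le_iff₀ two_pos, ← sub_nonneg]
      have : (s + a ^ 2 / (2 * (s + a))) * 2 - (s + a) = s ^ 2 / (s + a) := by
        field_simp; ring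
      rw [this]; positivity
    rw [hstep, pow_succ]
    linarith

theorem gap_sub_gap_succ (h : s + K * gap K η s k ≠ 0) :
    gap K η s k - gap K η s (k + 1) = majorant K s (gap K η s k) / (s + K * gap K η s k) := by
  rw [gap, majorant, eq_div_iff h, sub_mul, div_mul_eq_mul_div, mul_div_mul_right _ _ h]
  ring

theorem majorant_gap_succ (h : s + K * gap K η s k ≠ 0) :
    majorant K s (gap K η s (k + 1)) = K / 2 * (gap K η s k - gap K η s (k + 1)) ^ 2 := by
  rw [gap, majorant]
  field_simp
  ring

theorem gap_le (hK : 0 ≤ K) (hη : 0 ≤ η) (hs : 0 ≤ s) (hsq : s ^ 2 = 1 - 2 * (K * η))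
    (k : ℕ) : gap K η s k ≤ 2 * 2⁻¹ ^ k * (2 * (K * η)) ^ (2 ^ k - 1) * η := by
  induction k with
  | zero =>
    show 2 * η / (1 + s) ≤ _
    simpa using div_le_self (by linarith : 0 ≤ 2 * η) (by linarith : 1 ≤ 1 + s)
  | succ k ih =>
    have hu := half_pow_le_slope hs hsq k
    have hexp : 2 ^ (k + 1) - 1 = (2 ^ k - 1) + (2 ^ k - 1) + 1 := by
      have : 1 ≤ 2 ^ k := Nat.one_le_two_pow
      omega
    calc gap K η s (k + 1) = K * gap K η s k ^ 2 / (2 * (s + K * gap K η s k)) := rfl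
      _ ≤ K * (2 * 2⁻¹ ^ k * (2 * (K * η)) ^ (2 ^ k - 1) * η) ^ 2 / (2 * 2⁻¹ ^ k) := by
        gcongr
        exact gap_nonneg hK hη hs k
      _ = 2 * 2⁻¹ ^ (k + 1) * (2 * (K * η)) ^ (2 ^ (k + 1) - 1) * η := by
        rw [hexp, pow_add, pow_add, pow_one, pow_succ]
        field_simp
        ring

theorem tendsto_gap (hK : 0 ≤ K) (hη : 0 ≤ η) (hs : 0 ≤ s) (hsq : s ^ 2 = 1 - 2 * (K * η)) :
    Tendsto (gap K η s) atTop (𝓝 0) := by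
  have hbound : ∀ k, gap K η s k ≤ 2 * η * 2⁻¹ ^ k := fun k => by
    have : (2 * (K * η)) ^ (2 ^ k - 1) ≤ 1 := pow_le_one₀ (by positivity) (by nlinarith)
    calc gap K η s k ≤ 2 * 2⁻¹ ^ k * (2 * (K * η)) ^ (2 ^ k - 1) * η := gap_le hK hη hs hsq k
      _ ≤ 2 * 2⁻¹ ^ k * 1 * η := by gcongr
      _ = 2 * η * 2⁻¹ ^ k := by ring
  refine squeeze_zero (gap_nonneg hK hη hs) hbound ?_
  simpa using
    (tendsto_pow_atTop_nhds_zero_of_lt_one (r := (2⁻¹ : ℝ)) (by norm_num) (by norm_num)).const_mul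
      (2 * η)

theorem tendsto_majorant_gap (hK : 0 ≤ K) (hη : 0 ≤ η) (hs : 0 ≤ s)
    (hsq : s ^ 2 = 1 - 2 * (K * η)) :
    Tendsto (fun k => majorant K s (gap K η s k)) atTop (𝓝 0) := by
  have hcont : Continuous (majorant K s) := by unfold majorant; fun_prop
  have h := (hcont.tendsto 0).comp (tendsto_gap hK hη hs hsq)
  rwa [show majorant K s 0 = 0 by simp [majorant]] at h

theorem mem_of_norm_sub_le_gap {E : Type*} [SeminormedAddCommGroup E] {D : Set E} {x₀ x : E}
    {k : ℕ} (hK : 0 ≤ K) (hη : 0 ≤ η) (hs : 0 ≤ s)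
    (hball : Metric.closedBall x₀ (gap K η s 0) ⊆ D)
    (h : ‖x - x₀‖ ≤ gap K η s 0 - gap K η s k) : x ∈ D :=
  hball <| by
    rw [Metric.mem_closedBall, dist_eq_norm]
    linarith [gap_nonneg hK hη hs k]

section Newton

variable {E G : Type*} [NormedAddCommGroup E] [NormedSpace ℝ E] [NormedAddCommGroup G]
  [NormedSpace ℝ G] {D : Set E} {F : E → G} {F' : E → E →L[ℝ] G} {A : E ≃L[ℝ] G} {x₀ x : E}
  {k : ℕ}

theorem norm_symm_apply_le_of_add_fderiv_eq_zero (hconv : Convex ℝ D)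
    (hF : ∀ z ∈ D, HasFDerivAt F (F' z) z)
    (hLip : ∀ x ∈ D, ∀ y ∈ D, ‖(A.symm : G →L[ℝ] E).comp (F' x - F' y)‖ ≤ K * ‖x - y‖)
    {y : E} (hx : x ∈ D) (hy : y ∈ D) (hxy : F x + F' x (y - x) = 0) :
    ‖A.symm (F y)‖ ≤ K / 2 * ‖y - x‖ ^ 2 := by
  have h := hconv.norm_image_sub_sub_fderiv_apply_le (f := fun z => A.symm (F z))
    (f' := fun z => (A.symm : G →L[ℝ] E).comp (F' z))
    (fun z hz => A.symm.hasFDerivAt.comp z (hF z hz)) hx hy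
    (fun z hz => by rw [← ContinuousLinearMap.comp_sub]; exact hLip z hz x hx)
  rwa [ContinuousLinearMap.comp_apply, ContinuousLinearEquiv.coe_coe, sub_sub, ← map_add, hxy,
    map_zero, sub_zero] at h

variable [CompleteSpace E]

def Majorized (F : E → G) (A : E ≃L[ℝ] G) (K η s : ℝ) (x₀ : E) (k : ℕ) (x : E) : Prop :=
  ‖x - x₀‖ ≤ gap K η s 0 - gap K η s k ∧ ‖A.symm (F x)‖ ≤ majorant K s (gap K η s k)

theorem Majorized.exists_equiv (hK : 0 ≤ K) (hη : 0 ≤ η) (hs : 0 ≤ s)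
    (hsq : s ^ 2 = 1 - 2 * (K * η)) (hball : Metric.closedBall x₀ (gap K η s 0) ⊆ D)
    (hA : (A : E →L[ℝ] G) = F' x₀)
    (hLip : ∀ x ∈ D, ∀ y ∈ D, ‖(A.symm : G →L[ℝ] E).comp (F' x - F' y)‖ ≤ K * ‖x - y‖)
    (h : Majorized F A K η s x₀ k x) :
    ∃ B : E ≃L[ℝ] G, (B : E →L[ℝ] G) = F' x ∧
      ‖B.symm (F x)‖ ≤ gap K η s k - gap K η s (k + 1) := by
  obtain ⟨hdist, hres⟩ := h
  have hu : 0 < s + K * gap K η s k := lt_of_lt_of_le (by positivity) (half_pow_le_slope hs hsq k)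
  have hx₀D : x₀ ∈ D := mem_of_norm_sub_le_gap (k := 0) hK hη hs hball (by simp)
  have hxD : x ∈ D := mem_of_norm_sub_le_gap hK hη hs hball hdist
  have hT : ‖1 - (A.symm : G →L[ℝ] E).comp (F' x)‖ ≤ 1 - (s + K * gap K η s k) :=
    calc ‖1 - (A.symm : G →L[ℝ] E).comp (F' x)‖
        = ‖(A.symm : G →L[ℝ] E).comp (F' x₀ - F' x)‖ := by
          rw [ContinuousLinearMap.comp_sub, ← hA, A.coe_symm_comp_coe]; rfl
      _ ≤ K * ‖x - x₀‖ := by rw [norm_sub_rev x]; exact hLip _ hx₀D _ hxD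
      _ ≤ K * (gap K η s 0 - gap K η s k) := by gcongr
      _ = 1 - (s + K * gap K η s k) := by linear_combination K_mul_gap_zero hs hsq
  obtain ⟨B, hB, hBle⟩ := A.exists_eq_of_norm_one_sub_symm_comp_le hT hu
  refine ⟨B, hB, ?_⟩
  calc ‖B.symm (F x)‖ ≤ (s + K * gap K η s k)⁻¹ * ‖A.symm (F x)‖ := hBle _
    _ ≤ (s + K * gap K η s k)⁻¹ * majorant K s (gap K η s k) := by gcongr
    _ = gap K η s k - gap K η s (k + 1) := by rw [gap_sub_gap_succ hu.ne', inv_mul_eq_div]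

theorem Majorized.succ_newtonMap (hconv : Convex ℝ D) (hF : ∀ z ∈ D, HasFDerivAt F (F' z) z)
    (hK : 0 ≤ K) (hη : 0 ≤ η) (hs : 0 ≤ s)
    (hsq : s ^ 2 = 1 - 2 * (K * η)) (hball : Metric.closedBall x₀ (gap K η s 0) ⊆ D)
    (hA : (A : E →L[ℝ] G) = F' x₀)
    (hLip : ∀ x ∈ D, ∀ y ∈ D, ‖(A.symm : G →L[ℝ] E).comp (F' x - F' y)‖ ≤ K * ‖x - y‖)
    (h : Majorized F A K η s x₀ k x) :
    Majorized F A K η s x₀ (k + 1) (newtonMap F F' x) := by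
  obtain ⟨B, hB, hBle⟩ := h.exists_equiv hK hη hs hsq hball hA hLip
  rw [newtonMap_eq B hB]
  set y := x - B.symm (F x)
  have hyx : y - x = -B.symm (F x) := sub_sub_cancel_left _ _
  have hstep : ‖y - x‖ ≤ gap K η s k - gap K η s (k + 1) := by rwa [hyx, norm_neg]
  have hdist : ‖y - x₀‖ ≤ gap K η s 0 - gap K η s (k + 1) := by
    linarith [norm_sub_le_norm_sub_add_norm_sub y x x₀, h.1]
  have hlin : F x + F' x (y - x) = 0 := by
    rw [hyx, map_neg, ← hB, ContinuousLinearEquiv.coe_coe, B.apply_symm_apply, add_neg_cancel]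
  have hu : 0 < s + K * gap K η s k := lt_of_lt_of_le (by positivity) (half_pow_le_slope hs hsq k)
  refine ⟨hdist, ?_⟩
  calc ‖A.symm (F y)‖ ≤ K / 2 * ‖y - x‖ ^ 2 :=
        norm_symm_apply_le_of_add_fderiv_eq_zero hconv hF hLip
          (mem_of_norm_sub_le_gap hK hη hs hball h.1) (mem_of_norm_sub_le_gap hK hη hs hball hdist)
          hlin
    _ ≤ K / 2 * (gap K η s k - gap K η s (k + 1)) ^ 2 := by gcongr
    _ = majorant K s (gap K η s (k + 1)) := (majorant_gap_succ hu.ne').symm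

theorem majorized_newtonSeq (hconv : Convex ℝ D) (hF : ∀ z ∈ D, HasFDerivAt F (F' z) z)
    (hK : 0 ≤ K) (hη : 0 ≤ η) (hs : 0 ≤ s)
    (hsq : s ^ 2 = 1 - 2 * (K * η)) (hball : Metric.closedBall x₀ (gap K η s 0) ⊆ D)
    (hA : (A : E →L[ℝ] G) = F' x₀)
    (hLip : ∀ x ∈ D, ∀ y ∈ D, ‖(A.symm : G →L[ℝ] E).comp (F' x - F' y)‖ ≤ K * ‖x - y‖)
    (hstep : ‖A.symm (F x₀)‖ ≤ η) (k : ℕ) :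
    Majorized F A K η s x₀ k (newtonSeq F F' x₀ k) := by
  induction k with
  | zero => exact ⟨by simp [newtonSeq], by rwa [majorant_gap_zero hs hsq]⟩
  | succ k ih =>
    rw [newtonSeq_succ]
    exact ih.succ_newtonMap hconv hF hK hη hs hsq hball hA hLip

theorem exists_equiv_newtonSeq (hconv : Convex ℝ D) (hF : ∀ z ∈ D, HasFDerivAt F (F' z) z)
    (hK : 0 ≤ K) (hη : 0 ≤ η) (hs : 0 ≤ s)
    (hsq : s ^ 2 = 1 - 2 * (K * η)) (hball : Metric.closedBall x₀ (gap K η s 0) ⊆ D)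
    (hA : (A : E →L[ℝ] G) = F' x₀)
    (hLip : ∀ x ∈ D, ∀ y ∈ D, ‖(A.symm : G →L[ℝ] E).comp (F' x - F' y)‖ ≤ K * ‖x - y‖)
    (hstep : ‖A.symm (F x₀)‖ ≤ η) (k : ℕ) :
    ∃ B : E ≃L[ℝ] G, (B : E →L[ℝ] G) = F' (newtonSeq F F' x₀ k) ∧
      newtonSeq F F' x₀ (k + 1) = newtonSeq F F' x₀ k - B.symm (F (newtonSeq F F' x₀ k)) ∧
      ‖B.symm (F (newtonSeq F F' x₀ k))‖ ≤ gap K η s k - gap K η s (k + 1) := by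
  obtain ⟨B, hB, hle⟩ := (majorized_newtonSeq hconv hF hK hη hs hsq hball hA hLip hstep
    k).exists_equiv hK hη hs hsq hball hA hLip
  exact ⟨B, hB, (newtonSeq_succ x₀ k).trans (newtonMap_eq B hB), hle⟩

theorem exists_tendsto_newtonSeq (hconv : Convex ℝ D) (hF : ∀ z ∈ D, HasFDerivAt F (F' z) z)
    (hK : 0 ≤ K) (hη : 0 ≤ η) (hs : 0 ≤ s)
    (hsq : s ^ 2 = 1 - 2 * (K * η)) (hball : Metric.closedBall x₀ (gap K η s 0) ⊆ D)
    (hA : (A : E →L[ℝ] G) = F' x₀)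
    (hLip : ∀ x ∈ D, ∀ y ∈ D, ‖(A.symm : G →L[ℝ] E).comp (F' x - F' y)‖ ≤ K * ‖x - y‖)
    (hstep : ‖A.symm (F x₀)‖ ≤ η) :
    ∃ xs, Tendsto (newtonSeq F F' x₀) atTop (𝓝 xs) ∧ F xs = 0 ∧
      ∀ k, ‖xs - newtonSeq F F' x₀ k‖ ≤ gap K η s k := by
  obtain ⟨xs, hlim, hxs⟩ := exists_tendsto_dist_le_of_dist_succ_le_sub (x := newtonSeq F F' x₀)
    (tendsto_gap hK hη hs hsq) fun k => by
      obtain ⟨B, -, hxk, hle⟩ :=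
        exists_equiv_newtonSeq hconv hF hK hη hs hsq hball hA hLip hstep k
      rwa [dist_eq_norm', hxk, sub_sub_cancel_left, norm_neg]
  simp only [dist_eq_norm'] at hxs
  have hxsD : xs ∈ D := hball (by rw [Metric.mem_closedBall, dist_eq_norm]; exact hxs 0)
  have hres : Tendsto (fun k => A.symm (F (newtonSeq F F' x₀ k))) atTop (𝓝 0) :=
    squeeze_zero_norm (fun k => (majorized_newtonSeq hconv hF hK hη hs hsq hball hA hLip hstep
      k).2) (tendsto_majorant_gap hK hη hs hsq)
  have hFxs : A.symm (F xs) = 0 := tendsto_nhds_unique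
    ((A.symm.continuous.tendsto _).comp ((hF xs hxsD).continuousAt.tendsto.comp hlim)) hres
  exact ⟨xs, hlim, by simpa using hFxs, hxs⟩

end Newton

end Kantorovich

open Kantorovich in
theorem kantorovich_newton_general {E : Type*} [NormedAddCommGroup E] [NormedSpace ℝ E]
    [CompleteSpace E]
    (D : Set E) (hconv : Convex ℝ D)
    (F : E → E) (F' : E → E →L[ℝ] E)
    (hF : ∀ x ∈ D, HasFDerivAt F (F' x) x)
    (x₀ : E)
    (A : E ≃L[ℝ] E) (hA : (A : E →L[ℝ] E) = F' x₀)
    (K η : ℝ) (hK : 0 ≤ K) (hη : 0 ≤ η)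
    (hLip : ∀ x ∈ D, ∀ y ∈ D,
      ‖(A.symm : E →L[ℝ] E).comp (F' x - F' y)‖ ≤ K * ‖x - y‖)
    (hstep : ‖A.symm (F x₀)‖ ≤ η)
    (hh : K * η ≤ 1 / 2)
    (hball : Metric.closedBall x₀ (2 * η / (1 + Real.sqrt (1 - 2 * (K * η)))) ⊆ D) :
    ∃ x : ℕ → E, x 0 = x₀ ∧
      (∀ k : ℕ, x k ∈ Metric.closedBall x₀ (2 * η / (1 + Real.sqrt (1 - 2 * (K * η)))) ∧
        ∃ Ak : E ≃L[ℝ] E, (Ak : E →L[ℝ] E) = F' (x k) ∧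
          x (k + 1) = x k - Ak.symm (F (x k))) ∧
      ∃ xs : E, Tendsto x atTop (nhds xs) ∧ F xs = 0 ∧
        ‖xs - x₀‖ ≤ 2 * η / (1 + Real.sqrt (1 - 2 * (K * η))) ∧
        ∀ k : ℕ, 1 ≤ k →
          ‖xs - x k‖ ≤ (2 : ℝ) ^ ((1 : ℤ) - (k : ℤ)) * (2 * (K * η)) ^ (2 ^ k - 1) * η := by
  set s := Real.sqrt (1 - 2 * (K * η))
  have hs : 0 ≤ s := Real.sqrt_nonneg _
  have hsq : s ^ 2 = 1 - 2 * (K * η) := Real.sq_sqrt (by linarith)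
  change Metric.closedBall x₀ (gap K η s 0) ⊆ D at hball
  change ∃ x : ℕ → E, x 0 = x₀ ∧ (∀ k : ℕ, x k ∈ Metric.closedBall x₀ (gap K η s 0) ∧ _) ∧
    ∃ xs : E, _ ∧ _ ∧ ‖xs - x₀‖ ≤ gap K η s 0 ∧ _
  obtain ⟨xs, hlim, hFxs, hxs⟩ :=
    exists_tendsto_newtonSeq hconv hF hK hη hs hsq hball hA hLip hstep
  refine ⟨newtonSeq F F' x₀, rfl, fun k => ⟨?_, ?_⟩, xs, hlim, hFxs, hxs 0, fun k _ => ?_⟩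
  · rw [Metric.mem_closedBall, dist_eq_norm]
    linarith [(majorized_newtonSeq hconv hF hK hη hs hsq hball hA hLip hstep k).1,
      gap_nonneg hK hη hs k]
  · obtain ⟨B, hB, hxk, -⟩ := exists_equiv_newtonSeq hconv hF hK hη hs hsq hball hA hLip hstep k
    exact ⟨B, hB, hxk⟩
  · rw [zpow_sub₀ two_ne_zero, zpow_one, zpow_natCast, div_eq_mul_inv, ← inv_pow]
    exact (hxs k).trans (gap_le hK hη hs hsq k)

/-- Kantorovich's theorem on Newton's method (Theorem 6 in Kantorovich–Akilov). -/
theorem kantorovich_newton {E : Type*} [NormedAddCommGroup E] [NormedSpace ℝ E]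
    [CompleteSpace E]
    (D : Set E) (hD : IsOpen D) (hconv : Convex ℝ D)
    (F : E → E) (F' : E → E →L[ℝ] E)
    (hF : ∀ x ∈ D, HasFDerivAt F (F' x) x)
    (x₀ : E) (hx₀ : x₀ ∈ D)
    (A : E ≃L[ℝ] E) (hA : (A : E →L[ℝ] E) = F' x₀)
    (K η : ℝ) (hK : 0 ≤ K) (hη : 0 ≤ η)
    (hLip : ∀ x ∈ D, ∀ y ∈ D,
      ‖(A.symm : E →L[ℝ] E).comp (F' x - F' y)‖ ≤ K * ‖x - y‖)
    (hstep : ‖A.symm (F x₀)‖ ≤ η)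
    (hh : K * η ≤ 1 / 2)
    (hball : Metric.closedBall x₀ (2 * η / (1 + Real.sqrt (1 - 2 * (K * η)))) ⊆ D) :
    ∃ x : ℕ → E, x 0 = x₀ ∧
      (∀ k : ℕ, x k ∈ Metric.closedBall x₀ (2 * η / (1 + Real.sqrt (1 - 2 * (K * η)))) ∧
        ∃ Ak : E ≃L[ℝ] E, (Ak : E →L[ℝ] E) = F' (x k) ∧
          x (k + 1) = x k - Ak.symm (F (x k))) ∧
      ∃ xs : E, Tendsto x atTop (nhds xs) ∧ F xs = 0 ∧
        ‖xs - x₀‖ ≤ 2 * η / (1 + Real.sqrt (1 - 2 * (K * η))) ∧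
        ∀ k : ℕ, 1 ≤ k →
          ‖xs - x k‖ ≤ (2 : ℝ) ^ ((1 : ℤ) - (k : ℤ)) * (2 * (K * η)) ^ (2 ^ k - 1) * η :=
  kantorovich_newton_general D hconv F F' hF x₀ A hA K η hK hη hLip hstep hh hball
end

section
/- Suppose sup_t ‖F*(t)‖_∞ ≤ η with probability tending to one, the Jacobian F^{(1)} is Lipschitz in the sense ‖[F^{(1)}(x) - F^{(1)}(y)]v‖_∞ ≤ λ‖x-y‖_∞‖v‖_∞ with λ = 3e^{q_n}, and ‖[F^{(1)}(η*)]^{-1}F(η*)‖_∞ ≤ r with ρ := effective Lipschitz constant of the preconditioned map satisfying ρ·r = o(1). Then the Kantorovich condition h = Kη ≤ 1/2 holds eventually, and the Newton iteration starting at η* converges to a root η̂ with ‖η̂ - η*‖_∞ ≤ 2r/(1 + √(1 - 2ρr)) ≤ 4r for n large. -/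
/-!
Let `c = η*` and `A = F'(c)`. The simplified Newton map `G x = x - A⁻¹ F x` has derivative
`A⁻¹ (F' c - F' x)`, of norm at most `ρ ‖x - c‖`. Integrating this along the segment from `c`
gives `‖G x - c‖ ≤ r + ρ/2 ‖x - c‖²`, so `G` maps the closed ball of radius `t` about `c` into
itself as soon as `r + ρ/2 t² ≤ t`, and it contracts there with constant `ρ t` by the mean value
theorem. The smallest such `t` is the root `t* = 2r/(1 + √(1 - 2ρr))` of `ρ/2 t² - t + r`, for
which `ρ t* = 1 - √(1 - 2ρr)`; this is `< 1` when `ρ r < 1/2`, and `t* ≤ 4r` when `ρ r ≤ 3/8`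
because then `√(1 - 2ρr) ≥ 1/2`. Banach's fixed point theorem yields a fixed point of `G`, i.e.
a root of `F`, within `t*` of `c`.
-/

open Metric Set

section MeanValue

variable {E F : Type*} [NormedAddCommGroup E] [NormedSpace ℝ E]
  [NormedAddCommGroup F] [NormedSpace ℝ F]

theorem norm_image_sub_le_half_mul_sq_of_norm_fderiv_le {G : E → F} {G' : E → E →L[ℝ] F}
    {c x : E} {ρ : ℝ} (hG : ∀ z ∈ segment ℝ c x, HasFDerivAt G (G' z) z)
    (hG' : ∀ z ∈ segment ℝ c x, ‖G' z‖ ≤ ρ * ‖z - c‖) :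
    ‖G x - G c‖ ≤ ρ / 2 * ‖x - c‖ ^ 2 := by
  set p : ℝ → E := fun u => c + u • (x - c)
  have hp : ∀ u ∈ Icc (0 : ℝ) 1, p u ∈ segment ℝ c x := fun u hu => by
    rw [segment_eq_image']; exact mem_image_of_mem _ hu
  have hpd : ∀ u, HasDerivAt p (x - c) u := fun u =>
    (((hasDerivAt_id' u).smul_const (x - c)).const_add c).congr_deriv (one_smul ℝ _)
  have hf : ∀ u ∈ Icc (0 : ℝ) 1, HasDerivAt (fun u => G (p u) - G c) (G' (p u) (x - c)) u :=
    fun u hu => ((hG _ (hp u hu)).comp_hasDerivAt u (hpd u)).sub_const (G c)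
  have hB : ∀ u, HasDerivAt (fun u : ℝ => ρ / 2 * ‖x - c‖ ^ 2 * u ^ 2)
      (ρ / 2 * ‖x - c‖ ^ 2 * (2 * u)) u := fun u => by
    simpa using (hasDerivAt_pow 2 u).const_mul (ρ / 2 * ‖x - c‖ ^ 2)
  have key := image_norm_le_of_norm_deriv_right_le_deriv_boundary (a := 0) (b := 1)
    (fun u hu => (hf u hu).continuousAt.continuousWithinAt)
    (fun u hu => (hf u (Ico_subset_Icc_self hu)).hasDerivWithinAt) (by simp [p]) hB
    (fun u hu => calc
      ‖G' (p u) (x - c)‖ ≤ ‖G' (p u)‖ * ‖x - c‖ := (G' (p u)).le_opNorm _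
      _ ≤ ρ * (u * ‖x - c‖) * ‖x - c‖ := by
        gcongr
        simpa [p, norm_smul, abs_of_nonneg hu.1] using hG' _ (hp u (Ico_subset_Icc_self hu))
      _ = ρ / 2 * ‖x - c‖ ^ 2 * (2 * u) := by ring)
    (right_mem_Icc.2 zero_le_one)
  simpa [p] using key

end MeanValue

section FixedPoint

variable {E : Type*} [NormedAddCommGroup E] [NormedSpace ℝ E] [CompleteSpace E]

theorem exists_fixedPoint_mem_closedBall_of_norm_fderiv_le {G : E → E} {G' : E → E →L[ℝ] E}
    {c : E} {ρ r t : ℝ} (hG : ∀ x ∈ closedBall c t, HasFDerivAt G (G' x) x)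
    (hG' : ∀ x ∈ closedBall c t, ‖G' x‖ ≤ ρ * ‖x - c‖) (hρ : 0 ≤ ρ)
    (hc : ‖G c - c‖ ≤ r) (hrt : r + ρ / 2 * t ^ 2 ≤ t) (hρt : ρ * t < 1) :
    ∃ x ∈ closedBall c t, G x = x := by
  have ht : 0 ≤ t := by nlinarith [norm_nonneg (G c - c), sq_nonneg t]
  have hc_mem : c ∈ closedBall c t := mem_closedBall_self ht
  have hseg : ∀ x ∈ closedBall c t, segment ℝ c x ⊆ closedBall c t :=
    fun x hx => (convex_closedBall c t).segment_subset hc_mem hx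
  have hmaps : MapsTo G (closedBall c t) (closedBall c t) := fun x hx => by
    have hxc : ‖x - c‖ ≤ t := mem_closedBall_iff_norm.mp hx
    have hquad := norm_image_sub_le_half_mul_sq_of_norm_fderiv_le
      (fun z hz => hG z (hseg x hx hz)) (fun z hz => hG' z (hseg x hx hz))
    rw [mem_closedBall_iff_norm]
    calc ‖G x - c‖ ≤ ‖G x - G c‖ + ‖G c - c‖ := norm_sub_le_norm_sub_add_norm_sub _ _ _
      _ ≤ ρ / 2 * t ^ 2 + r := by gcongr; exact hquad.trans (by gcongr)
      _ ≤ t := by linarith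
  have hlip : LipschitzOnWith (Real.toNNReal (ρ * t)) G (closedBall c t) :=
    (convex_closedBall c t).lipschitzOnWith_of_nnnorm_hasFDerivWithin_le
      (fun x hx => (hG x hx).hasFDerivWithinAt) fun x hx => by
        rw [← NNReal.coe_le_coe, Real.coe_toNNReal _ (by positivity), coe_nnnorm]
        exact (hG' x hx).trans (by gcongr; exact mem_closedBall_iff_norm.mp hx)
  have hcontr : ContractingWith (Real.toNNReal (ρ * t)) (hmaps.restrict G _ _) :=
    ⟨Real.toNNReal_lt_one.mpr hρt, hmaps.lipschitzOnWith_iff_restrict.mp hlip⟩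
  obtain ⟨x, hx, hfix, -⟩ := hcontr.exists_fixedPoint' isClosed_closedBall.isComplete hmaps
    hc_mem (edist_ne_top _ _)
  exact ⟨x, hx, hfix⟩

theorem exists_eq_zero_mem_closedBall_of_kantorovich {F : E → E} {F' : E → E →L[ℝ] E} {c : E}
    {A : E ≃L[ℝ] E} {ρ r t : ℝ} (hF : ∀ x ∈ closedBall c t, HasFDerivAt F (F' x) x)
    (hA : (A : E →L[ℝ] E) = F' c)
    (hLip : ∀ x ∈ closedBall c t, ‖(A.symm : E →L[ℝ] E).comp (F' x - F' c)‖ ≤ ρ * ‖x - c‖)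
    (hρ : 0 ≤ ρ) (hstep : ‖A.symm (F c)‖ ≤ r) (hrt : r + ρ / 2 * t ^ 2 ≤ t) (hρt : ρ * t < 1) :
    ∃ x ∈ closedBall c t, F x = 0 := by
  have hG : ∀ x ∈ closedBall c t, HasFDerivAt (fun x => x - A.symm (F x))
      (-(A.symm : E →L[ℝ] E).comp (F' x - F' c)) x := fun x hx => by
    refine ((hasFDerivAt_id x).sub
      ((A.symm : E →L[ℝ] E).hasFDerivAt.comp x (hF x hx))).congr_fderiv ?_
    rw [← hA]
    ext v
    simp
  obtain ⟨x, hx, hfix⟩ := exists_fixedPoint_mem_closedBall_of_norm_fderiv_le hG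
    (fun x hx => (norm_neg _).trans_le (hLip x hx)) hρ (by simpa using hstep) hrt hρt
  exact ⟨x, hx, by simpa using hfix⟩

end FixedPoint

section Radius

/-- The smaller root of `ρ/2 t² - t + r`, written so that it stays meaningful at `ρ = 0`. -/
noncomputable def kantorovichRadius (ρ r : ℝ) : ℝ :=
  2 * r / (1 + √(1 - 2 * (ρ * r)))

variable {ρ r : ℝ}

theorem mul_kantorovichRadius (h : ρ * r ≤ 1 / 2) :
    ρ * kantorovichRadius ρ r = 1 - √(1 - 2 * (ρ * r)) := by
  have hs := Real.sq_sqrt (show 0 ≤ 1 - 2 * (ρ * r) by linarith)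
  have hpos : 0 < 1 + √(1 - 2 * (ρ * r)) := by positivity
  rw [kantorovichRadius, mul_div_assoc', div_eq_iff hpos.ne']
  nlinarith

theorem add_half_mul_kantorovichRadius_sq (h : ρ * r ≤ 1 / 2) :
    r + ρ / 2 * kantorovichRadius ρ r ^ 2 = kantorovichRadius ρ r := by
  have hρt := mul_kantorovichRadius h
  have hpos : 0 < 1 + √(1 - 2 * (ρ * r)) := by positivity
  have ht : kantorovichRadius ρ r * (1 + √(1 - 2 * (ρ * r))) = 2 * r :=
    div_mul_cancel₀ _ hpos.ne'
  linear_combination (kantorovichRadius ρ r / 2) * hρt - ht / 2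

theorem mul_kantorovichRadius_lt_one (h : ρ * r < 1 / 2) : ρ * kantorovichRadius ρ r < 1 := by
  rw [mul_kantorovichRadius h.le, sub_lt_self_iff, Real.sqrt_pos]
  linarith

theorem kantorovichRadius_le_four_mul (hr : 0 ≤ r) (h : ρ * r ≤ 3 / 8) :
    kantorovichRadius ρ r ≤ 4 * r := by
  have hs : 1 / 2 ≤ √(1 - 2 * (ρ * r)) :=
    Real.le_sqrt_of_sq_le (by linarith)
  rw [kantorovichRadius, div_le_iff₀ (by positivity)]
  nlinarith

end Radius

theorem kantorovich_root_bound_general {E : Type*} [NormedAddCommGroup E] [NormedSpace ℝ E]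
    [CompleteSpace E]
    (F : E → E) (F' : E → E →L[ℝ] E)
    (hF : ∀ x, HasFDerivAt F (F' x) x)
    (ηs : E) (A : E ≃L[ℝ] E) (hA : (A : E →L[ℝ] E) = F' ηs)
    (ρ r : ℝ) (hρ : 0 ≤ ρ)
    (hLip : ∀ x y : E, ‖(A.symm : E →L[ℝ] E).comp (F' x - F' y)‖ ≤ ρ * ‖x - y‖)
    (hstep : ‖A.symm (F ηs)‖ ≤ r)
    (hsmall : ρ * r ≤ 3 / 8) :
    ρ * r ≤ 1 / 2 ∧
    ∃ ηhat : E, F ηhat = 0 ∧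
      ‖ηhat - ηs‖ ≤ 2 * r / (1 + Real.sqrt (1 - 2 * (ρ * r))) ∧
      2 * r / (1 + Real.sqrt (1 - 2 * (ρ * r))) ≤ 4 * r := by
  have hr : 0 ≤ r := (norm_nonneg _).trans hstep
  have hhalf : ρ * r < 1 / 2 := by linarith
  obtain ⟨ηhat, hmem, hroot⟩ := exists_eq_zero_mem_closedBall_of_kantorovich
    (fun x _ => hF x) hA (fun x _ => hLip x ηs) hρ hstep
    (add_half_mul_kantorovichRadius_sq hhalf.le).le (mul_kantorovichRadius_lt_one hhalf)
  exact ⟨hhalf.le, ηhat, hroot, mem_closedBall_iff_norm.mp hmem,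
    kantorovichRadius_le_four_mul hr hsmall⟩

/-- Packaged application of the Kantorovich theorem in Lemma 6: if the preconditioned first
Newton step is bounded by `r` and the preconditioned Jacobian is `ρ`-Lipschitz with `ρ r ≤ 3/8`,
then the Kantorovich condition `h ≤ 1/2` holds and a root `η̂` of `F` exists with
`‖η̂ - η*‖ ≤ 2r/(1+√(1-2ρr)) ≤ 4r`. -/
theorem kantorovich_root_bound {E : Type*} [NormedAddCommGroup E] [NormedSpace ℝ E]
    [CompleteSpace E]
    (F : E → E) (F' : E → E →L[ℝ] E)
    (hF : ∀ x, HasFDerivAt F (F' x) x)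
    (ηs : E) (A : E ≃L[ℝ] E) (hA : (A : E →L[ℝ] E) = F' ηs)
    (ρ r : ℝ) (hρ : 0 ≤ ρ) (hr : 0 ≤ r)
    (hLip : ∀ x y : E, ‖(A.symm : E →L[ℝ] E).comp (F' x - F' y)‖ ≤ ρ * ‖x - y‖)
    (hstep : ‖A.symm (F ηs)‖ ≤ r)
    (hsmall : ρ * r ≤ 3 / 8) :
    ρ * r ≤ 1 / 2 ∧
    ∃ ηhat : E, F ηhat = 0 ∧
      ‖ηhat - ηs‖ ≤ 2 * r / (1 + Real.sqrt (1 - 2 * (ρ * r))) ∧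
      2 * r / (1 + Real.sqrt (1 - 2 * (ρ * r))) ≤ 4 * r :=
  kantorovich_root_bound_general F F' hF ηs A hA ρ r hρ hLip hstep hsmall
end
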